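/- arXiv:1511.03738 — 9 statements merged into one kernel-verified Lean document; each statement's English description precedes it below -/
import Mathlib

section
/- Let S, q, k be natural numbers and a_1, ..., a_k natural numbers with sum S. Suppose min(a_1,...,a_k) ≥ q. Then the number of 0-1 matrices with k columns having column sums a_1,...,a_k, where q designated rows each have row sum k (all ones) and the remaining rows each have row sum at most 1, with total of S ones, equals (S - qk)! / ∏_{i=1}^k (a_i - q)!. Equivalently: the number of directed graphs (loops allowed) realizing the bidegree sequence with in-degrees (a_1,...,a_k,0,...,0) and out-degrees (k,...,k,1,...,1,0,...,0) (with q entries equal to k and S - qk entries equal to 1) is (S-qk)!/∏_i (a_i - q)!. -/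
/-- In-degree of node `v` in the directed graph with adjacency matrix `A`
(`A u v = true` means there is an edge `u → v`); loops are allowed. -/
def inDeg {N : ℕ} (A : Fin N → Fin N → Bool) (v : Fin N) : ℕ :=
  (Finset.univ.filter (fun u => A u v = true)).card

/-- Out-degree of node `v`. -/
def outDeg {N : ℕ} (A : Fin N → Fin N → Bool) (v : Fin N) : ℕ :=
  (Finset.univ.filter (fun u => A v u = true)).card

/-- Number of directed graphs (loops allowed, no multi-edges) realizing the
bidegree sequence with in-degrees `a` and out-degrees `b`. -/
noncomputable def numGraphs {N : ℕ} (a b : Fin N → ℕ) : ℕ :=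
  Nat.card {A : Fin N → Fin N → Bool // ∀ v, inDeg A v = a v ∧ outDeg A v = b v}

/-!
Edges only enter the first `k` columns, since the other columns have in-degree `0`. Hence each
of the `q` rows of out-degree `k` is full, each of the next `S - qk` rows has exactly one edge,
and the remaining rows are empty: a realizing graph is the same thing as a map `f` from the
`S - qk` single-edge rows to the `k` columns whose fibre over column `j` has `a_j - q` elements.
Such maps form one orbit of the permutation group of the rows, and the stabiliser of one of them
is the product of the permutation groups of its fibres, so by orbit–stabiliser there are
`(S - qk)! / ∏ (a_j - q)!` of them.
-/

open Finset Equiv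
open scoped Nat

section FiberCount

variable {α ι : Type*} [Fintype α] [DecidableEq ι]

theorem exists_comp_perm_eq_of_card_fiber_eq {f g : α → ι}
    (h : ∀ i, Fintype.card {a // g a = i} = Fintype.card {a // f a = i}) :
    ∃ σ : Perm α, f ∘ σ = g :=
  ⟨ofFiberEquiv fun i => Fintype.equivOfCardEq (h i), funext (ofFiberEquiv_map _)⟩

theorem exists_card_fiber_eq [Fintype ι] (c : ι → ℕ) (hc : ∑ i, c i = Fintype.card α) :
    ∃ g : α → ι, ∀ i, Fintype.card {a // g a = i} = c i := by
  have e : α ≃ Σ i, Fin (c i) := Fintype.equivOfCardEq (by simp [hc])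
  refine ⟨fun a => (e a).1, fun i => ?_⟩
  calc Fintype.card {a // (e a).1 = i}
      = Fintype.card {s : Σ i, Fin (c i) // s.1 = i} :=
        Fintype.card_congr (e.subtypeEquiv fun _ => Iff.rfl)
    _ = c i := by rw [Fintype.card_congr (sigmaSubtype i), Fintype.card_fin]

theorem card_comp_perm_eq_of_card_fiber_eq [DecidableEq α] [Fintype ι] {f g : α → ι}
    (h : ∀ i, Fintype.card {a // g a = i} = Fintype.card {a // f a = i}) :
    Fintype.card {σ : Perm α // f ∘ σ = g} = ∏ i, (Fintype.card {a // f a = i})! := by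
  obtain ⟨ρ, rfl⟩ := exists_comp_perm_eq_of_card_fiber_eq h
  rw [← DomMulAct.stabilizer_card]
  refine Fintype.card_congr (subtypeEquiv (Equiv.mulRight ρ⁻¹) fun σ => ?_)
  simp only [funext_iff, Function.comp_apply, Equiv.coe_mulRight, Perm.mul_apply]
  exact ⟨fun h x => by simpa using h (ρ⁻¹ x), fun h x => by simpa using h (ρ x)⟩

theorem card_fun_card_fiber_eq_mul_prod_factorial [DecidableEq α] [Fintype ι] (c : ι → ℕ)
    (hc : ∑ i, c i = Fintype.card α) :
    Nat.card {g : α → ι // ∀ i, Fintype.card {a // g a = i} = c i} * ∏ i, (c i)! =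
      (Fintype.card α)! := by
  obtain ⟨g₀, hg₀⟩ := exists_card_fiber_eq c hc
  let π : Perm α → {g : α → ι // ∀ i, Fintype.card {a // g a = i} = c i} := fun σ =>
    ⟨g₀ ∘ σ, fun i => by
      rw [← hg₀ i]; exact Fintype.card_congr (σ.subtypeEquiv fun _ => Iff.rfl)⟩
  have hfiber : ∀ g, Fintype.card {σ // π σ = g} = ∏ i, (c i)! := fun g => by
    rw [Fintype.card_congr (subtypeEquivRight fun σ => Subtype.ext_iff),
      card_comp_perm_eq_of_card_fiber_eq (fun i => (g.2 i).trans (hg₀ i).symm)]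
    simp only [hg₀]
  rw [← Fintype.card_perm, ← Fintype.card_congr (sigmaFiberEquiv π), Fintype.card_sigma,
    Nat.card_eq_fintype_card]
  simp [hfiber]

end FiberCount

def Realizes {N : ℕ} (A : Fin N → Fin N → Bool) (a b : Fin N → ℕ) : Prop :=
  ∀ v, inDeg A v = a v ∧ outDeg A v = b v

def padDeg (N : ℕ) {k : ℕ} (a : Fin k → ℕ) (v : Fin N) : ℕ :=
  if h : (v : ℕ) < k then a ⟨v, h⟩ else 0

section Rows

variable {N : ℕ}

def ofRows (R : Fin N → Finset (Fin N)) : Fin N → Fin N → Bool :=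
  fun u v => decide (v ∈ R u)

theorem outDeg_ofRows (R : Fin N → Finset (Fin N)) (u : Fin N) :
    outDeg (ofRows R) u = #(R u) := by
  simp [outDeg, ofRows]

theorem inDeg_ofRows (R : Fin N → Finset (Fin N)) (v : Fin N) :
    inDeg (ofRows R) v = #{u | v ∈ R u} := by
  simp [inDeg, ofRows]

theorem ofRows_injective : Function.Injective (ofRows (N := N)) := fun R R' h => by
  ext u v
  simpa [ofRows] using congrFun (congrFun h u) v

theorem ofRows_filter (A : Fin N → Fin N → Bool) : ofRows (fun u => {v | A u v}) = A := by
  ext u v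
  simp [ofRows]

end Rows

section PointerRows

variable {N k M : ℕ} (hkN : k ≤ N) (q : ℕ)

def pointerRows (f : Fin M → Fin k) (u : Fin N) : Finset (Fin N) :=
  if (u : ℕ) < q then univ.filter fun v => (v : ℕ) < k
  else if h : (u : ℕ) - q < M then {Fin.castLE hkN (f ⟨u - q, h⟩)} else ∅

def pointerOutDeg (N k q M : ℕ) (u : Fin N) : ℕ :=
  if (u : ℕ) < q then k else if (u : ℕ) < q + M then 1 else 0

theorem pointerRows_add (f : Fin M → Fin k) (r : Fin M) (h : q + r < N) :
    pointerRows hkN q f ⟨q + r, h⟩ = {Fin.castLE hkN (f r)} := by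
  simp [pointerRows]

theorem card_pointerRows (f : Fin M → Fin k) (u : Fin N) :
    #(pointerRows hkN q f u) = pointerOutDeg N k q M u := by
  unfold pointerRows pointerOutDeg
  split_ifs <;> first | omega | simp [Fin.card_filter_val_lt, hkN]

theorem val_lt_of_mem_pointerRows {f : Fin M → Fin k} {u v : Fin N}
    (hv : v ∈ pointerRows hkN q f u) : (v : ℕ) < k := by
  unfold pointerRows at hv
  split_ifs at hv
  · exact (mem_filter.1 hv).2
  · exact (mem_singleton.1 hv) ▸ (f _).isLt
  · exact absurd hv (notMem_empty v)

theorem card_filter_mem_pointerRows (hqN : q + M ≤ N) (f : Fin M → Fin k) (v : Fin N) :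
    #{u | v ∈ pointerRows hkN q f u} =
      if h : (v : ℕ) < k then q + #{r | f r = ⟨v, h⟩} else 0 := by
  split_ifs with hv
  · obtain ⟨t, rfl⟩ := Nat.exists_eq_add_of_le hqN
    have hlow : ∀ x : ℕ, ¬ q + M + x < q := by omega
    have hhigh : ∀ x : ℕ, ¬ q + M + x - q < M := by omega
    rw [card_filter, Fin.sum_univ_add, Fin.sum_univ_add]
    simp [pointerRows, Fin.ext_iff, hv, hlow, hhigh, eq_comm]
  · exact card_eq_zero.2 <| filter_eq_empty_iff.2 fun u _ hu =>
      hv (val_lt_of_mem_pointerRows hkN q hu)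

theorem pointerRows_injective (hqN : q + M ≤ N) :
    Function.Injective (pointerRows (M := M) hkN q) := by
  intro f g h
  funext r
  have hr := congrFun h ⟨q + r, by omega⟩
  rwa [pointerRows_add, pointerRows_add, singleton_inj, (Fin.castLE_injective hkN).eq_iff] at hr

theorem exists_eq_pointerRows (hqN : q + M ≤ N) {R : Fin N → Finset (Fin N)}
    (hcard : ∀ u, #(R u) = pointerOutDeg N k q M u) (hcol : ∀ u, ∀ v ∈ R u, (v : ℕ) < k) :
    ∃ f : Fin M → Fin k, R = pointerRows hkN q f := by
  have hsingle : ∀ r : Fin M, ∃ j : Fin k, R ⟨q + r, by omega⟩ = {Fin.castLE hkN j} := by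
    intro r
    have hr : #(R ⟨q + r, by omega⟩) = 1 := (hcard _).trans (by simp [pointerOutDeg])
    obtain ⟨w, hw⟩ := card_eq_one.1 hr
    exact ⟨⟨w, hcol _ w (hw ▸ mem_singleton_self w)⟩, hw⟩
  choose f hf using hsingle
  refine ⟨f, funext fun u => ?_⟩
  unfold pointerRows
  split_ifs with hq hM
  · refine eq_of_subset_of_card_le (fun v hv => by simpa using hcol u v hv) ?_
    rw [hcard u, pointerOutDeg, if_pos hq, Fin.card_filter_val_lt, min_eq_right hkN]
  · have hu : u = ⟨q + (u - q : ℕ), by omega⟩ :=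
      Fin.ext (Nat.add_sub_of_le (Nat.le_of_not_lt hq)).symm
    exact (congrArg R hu).trans (hf ⟨u - q, hM⟩)
  · rw [← card_eq_zero, hcard u, pointerOutDeg, if_neg hq, if_neg (by omega)]

end PointerRows

section PointerGraphs

variable {N k M q : ℕ} {a : Fin k → ℕ}

theorem realizes_ofRows_pointerRows_iff (hkN : k ≤ N) (hqN : q + M ≤ N) (ha : ∀ j, q ≤ a j)
    (f : Fin M → Fin k) :
    Realizes (ofRows (pointerRows hkN q f)) (padDeg N a) (pointerOutDeg N k q M) ↔
      ∀ j, Fintype.card {r // f r = j} = a j - q := by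
  simp only [Realizes, inDeg_ofRows, outDeg_ofRows, card_pointerRows,
    card_filter_mem_pointerRows hkN q hqN, padDeg, Fintype.card_subtype, and_true]
  constructor
  · intro h j
    have hj := h (Fin.castLE hkN j)
    simp only [Fin.val_castLE, j.isLt, dif_pos, Fin.eta] at hj
    have hqj := ha j
    omega
  · intro h v
    split_ifs with hv
    · have hqv := ha ⟨v, hv⟩
      rw [h]
      omega
    · rfl

theorem exists_eq_ofRows_pointerRows_of_realizes (hkN : k ≤ N) (hqN : q + M ≤ N)
    {A : Fin N → Fin N → Bool} (hA : Realizes A (padDeg N a) (pointerOutDeg N k q M)) :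
    ∃ f : Fin M → Fin k, A = ofRows (pointerRows hkN q f) := by
  have hcol : ∀ u v, A u v = true → (v : ℕ) < k := by
    intro u v huv
    by_contra hv
    have h0 := (hA v).1
    rw [padDeg, dif_neg hv, inDeg, card_eq_zero, filter_eq_empty_iff] at h0
    exact h0 (mem_univ u) huv
  obtain ⟨f, hf⟩ := exists_eq_pointerRows hkN q hqN (R := fun u => {v | A u v})
    (fun u => (hA u).2) (fun u v hv => hcol u v (by simpa using hv))
  exact ⟨f, by rw [← hf, ofRows_filter]⟩

theorem card_realizes_pointerOutDeg (hkN : k ≤ N) (hqN : q + M ≤ N) (ha : ∀ j, q ≤ a j) :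
    Nat.card {A // Realizes A (padDeg N a) (pointerOutDeg N k q M)} =
      Nat.card {f : Fin M → Fin k // ∀ j, Fintype.card {r // f r = j} = a j - q} := by
  symm
  refine Nat.card_congr (Equiv.ofBijective (fun f => ⟨ofRows (pointerRows hkN q f.1),
    (realizes_ofRows_pointerRows_iff hkN hqN ha f.1).2 f.2⟩) ⟨fun f g h => ?_, ?_⟩)
  · exact Subtype.ext <| pointerRows_injective hkN q hqN <| ofRows_injective <|
      congrArg Subtype.val h
  rintro ⟨A, hA⟩
  obtain ⟨f, rfl⟩ := exists_eq_ofRows_pointerRows_of_realizes hkN hqN hA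
  exact ⟨⟨f, (realizes_ofRows_pointerRows_iff hkN hqN ha f).1 hA⟩, rfl⟩

end PointerGraphs

theorem stmt_0_general (N k q S : ℕ) (a : Fin k → ℕ)
    (hS : ∑ i, a i = S)
    (hq : ∀ i, q ≤ a i)
    (hkN : k ≤ N) (hbN : q + (S - q * k) ≤ N) :
    numGraphs
      (fun i : Fin N => if h : (i : ℕ) < k then a ⟨(i : ℕ), h⟩ else 0)
      (fun i : Fin N =>
        if (i : ℕ) < q then k else if (i : ℕ) < q + (S - q * k) then 1 else 0)
      = Nat.factorial (S - q * k) / ∏ i, Nat.factorial (a i - q) := by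
  have hsum : ∑ j, (a j - q) = Fintype.card (Fin (S - q * k)) := by
    rw [sum_tsub_distrib _ fun j _ => hq j, hS, sum_const, card_univ, Fintype.card_fin,
      Fintype.card_fin, smul_eq_mul, Nat.mul_comm]
  have hcount := card_fun_card_fiber_eq_mul_prod_factorial _ hsum
  rw [Fintype.card_fin] at hcount
  rw [← hcount, Nat.mul_div_cancel _ (by positivity)]
  exact card_realizes_pointerOutDeg hkN hbN hq

/-- Lemma 1 (first case): with in-degrees `(a_1,…,a_k,0,…,0)` and out-degrees
consisting of `q` copies of `k`, `S - q·k` copies of `1` and zeros, where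
`S = ∑ a_i` and `min a_i ≥ q`, the number of realizing directed graphs
(loops allowed) equals `(S - q·k)! / ∏ i (a_i - q)!`. -/
theorem stmt_0 (N k q S : ℕ) (a : Fin k → ℕ)
    (hS : ∑ i, a i = S)
    (hq : ∀ i, q ≤ a i)
    (hqk : q * k ≤ S)
    (hkN : k ≤ N) (hbN : q + (S - q * k) ≤ N) :
    numGraphs
      (fun i : Fin N => if h : (i : ℕ) < k then a ⟨(i : ℕ), h⟩ else 0)
      (fun i : Fin N =>
        if (i : ℕ) < q then k else if (i : ℕ) < q + (S - q * k) then 1 else 0)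
      = Nat.factorial (S - q * k) / ∏ i, Nat.factorial (a i - q) :=
  stmt_0_general N k q S a hS hq hkN hbN
end

section
/- With the same setup (in-degrees (a_1,...,a_k,0,...,0) and out-degrees consisting of q copies of k, S-qk copies of 1, and the rest 0, where Σ_{i=1}^k a_i = S), if min(a_1,...,a_k) < q then there exists no directed graph (loops allowed) realizing this bidegree sequence. -/
/-! The `q` nodes of out-degree `k` can only send edges to the `k` nodes of positive
in-degree, so each of them is joined to all of those nodes. Then every node `i < k`
receives at least `q` edges, contradicting `a i < q`. -/

open Finset

section Digraph

variable {N : ℕ} {A : Fin N → Fin N → Bool}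

lemma inDeg_pos_of_adj {u v : Fin N} (h : A u v = true) : 0 < inDeg A v :=
  card_pos.mpr ⟨u, by simpa using h⟩

lemma card_le_inDeg_of_forall_adj {U : Finset (Fin N)} {v : Fin N}
    (h : ∀ u ∈ U, A u v = true) : #U ≤ inDeg A v :=
  card_le_card fun u hu => by simpa using h u hu

lemma adj_of_card_le_outDeg {T : Finset (Fin N)} {u v : Fin N}
    (hT : ∀ w, A u w = true → w ∈ T) (hdeg : #T ≤ outDeg A u) (hv : v ∈ T) :
    A u v = true := by
  have hsub : ({w | A u w = true} : Finset (Fin N)) ⊆ T := fun w hw => hT w (by simpa using hw)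
  have heq : ({w | A u w = true} : Finset (Fin N)) = T := eq_of_subset_of_card_le hsub hdeg
  simpa [← heq] using hv

end Digraph

theorem stmt_1_general (N k q S : ℕ) (a : Fin k → ℕ)
    (hq : ∃ i, a i < q)
    (hkN : k ≤ N) (hbN : q + (S - q * k) ≤ N) :
    numGraphs
      (fun i : Fin N => if h : (i : ℕ) < k then a ⟨(i : ℕ), h⟩ else 0)
      (fun i : Fin N =>
        if (i : ℕ) < q then k else if (i : ℕ) < q + (S - q * k) then 1 else 0)
      = 0 := by
  rw [numGraphs, Nat.card_eq_zero]
  refine .inl ⟨fun ⟨A, hA⟩ => ?_⟩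
  obtain ⟨i, hi⟩ := hq
  have heavy_adj (u v : Fin N) (hu : (u : ℕ) < q) (hv : (v : ℕ) < k) : A u v = true := by
    refine adj_of_card_le_outDeg (T := {w | (w : ℕ) < k}) (fun w hw => ?_) ?_ (by simpa using hv)
    · by_contra hwk
      have hpos := inDeg_pos_of_adj hw
      rw [(hA w).1, dif_neg (by simpa using hwk)] at hpos
      exact hpos.ne rfl
    · simp [Fin.card_filter_val_lt, (hA u).2, hu]
  have hin := card_le_inDeg_of_forall_adj (U := {u : Fin N | (u : ℕ) < q})
    (v := ⟨i, i.isLt.trans_le hkN⟩) fun u hu => heavy_adj u _ (by simpa using hu) i.isLt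
  simp only [(hA _).1, i.isLt, dif_pos, Fin.eta, Fin.card_filter_val_lt] at hin
  omega

/-- Lemma 1 (non-existence case): with in-degrees `(a_1,…,a_k,0,…,0)` and
out-degrees consisting of `q` copies of `k`, `S - q·k` copies of `1` and
zeros, where `S = ∑ a_i`, if some `a_i < q` then no directed graph (loops
allowed) realizes the bidegree sequence. -/
theorem stmt_1 (N k q S : ℕ) (a : Fin k → ℕ)
    (hS : ∑ i, a i = S)
    (hq : ∃ i, a i < q)
    (hqk : q * k ≤ S)
    (hkN : k ≤ N) (hbN : q + (S - q * k) ≤ N) :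
    numGraphs
      (fun i : Fin N => if h : (i : ℕ) < k then a ⟨(i : ℕ), h⟩ else 0)
      (fun i : Fin N =>
        if (i : ℕ) < q then k else if (i : ℕ) < q + (S - q * k) then 1 else 0)
      = 0 :=
  stmt_1_general N k q S a hq hkN hbN
end

section
/- Fix a bidegree sequence d = (a,b) ∈ ℤ^{N×2} and two indices i, j with in-degrees a_i ≥ a_j. For 0 ≤ k ≤ a_j, let X_k denote the set of residual bidegree sequences (a - a_i·e_i - a_j·e_j, b - s) where s ∈ ℤ^N satisfies: exactly k entries of s equal 2, no entry of s exceeds 2, all entries nonnegative, and Σ_n s_n = a_i + a_j. Let ‖G_d‖ denote the number of directed graphs (loops allowed, no multi-edges) realizing d and ‖G_{X_k}‖ the total number of graphs realizing any sequence in X_k. Then ‖G_d‖ = Σ_{k=0}^{a_j} C(a_i + a_j - 2k, a_j - k) · ‖G_{X_k}‖. -/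
/-- Number of directed graphs (loops allowed, no multi-edges) realizing the
integer bidegree sequence `(a,b)` (no graph realizes a sequence with a
negative entry). -/
noncomputable def numGraphsZ {N : ℕ} (a b : Fin N → ℤ) : ℕ :=
  Nat.card {A : Fin N → Fin N → Bool //
    ∀ v, (inDeg A v : ℤ) = a v ∧ (outDeg A v : ℤ) = b v}

/-!
Sort the realizations `A` of `(a, b)` by their profile `s n = A n i + A n j ∈ {0, 1, 2}`.
Deleting the in-edges of `i` and `j` turns a realization with profile `s` into a realization of
the residual sequence `(a - a_i e_i - a_j e_j, b - s)`. Conversely, a residual realization is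
rebuilt from `s` by choosing which of the `a_i + a_j - 2k` nodes with `s n = 1` send their edge
to `j` rather than to `i`, where `k` is the number of nodes with `s n = 2`; the in-degree of `j`
forces exactly `a_j - k` of them. Summing over `s`, grouped by `k`, gives the formula.
-/

open Finset

section

variable {N : ℕ}

def realizations (a b : Fin N → ℤ) : Finset (Fin N → Fin N → Bool) :=
  univ.filter fun A => ∀ v, (inDeg A v : ℤ) = a v ∧ (outDeg A v : ℤ) = b v

lemma numGraphsZ_eq_card_realizations (a b : Fin N → ℤ) :
    numGraphsZ a b = #(realizations a b) := by
  rw [numGraphsZ, Nat.card_eq_fintype_card, Fintype.card_subtype, realizations]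

lemma inDeg_eq_sum_toNat (A : Fin N → Fin N → Bool) (v : Fin N) :
    inDeg A v = ∑ u, (A u v).toNat := by
  rw [inDeg, card_filter]
  exact sum_congr rfl fun u _ => by cases A u v <;> rfl

lemma outDeg_eq_sum_toNat (A : Fin N → Fin N → Bool) (v : Fin N) :
    outDeg A v = ∑ u, (A v u).toNat := by
  rw [outDeg, card_filter]
  exact sum_congr rfl fun u _ => by cases A v u <;> rfl

lemma inDeg_eq_zero_iff {A : Fin N → Fin N → Bool} {v : Fin N} :
    inDeg A v = 0 ↔ ∀ u, A u v = false := by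
  simp [inDeg, filter_eq_empty_iff]

def level (s : Fin N → Fin 3) (m : ℕ) : Finset (Fin N) :=
  univ.filter fun n => (s n : ℕ) = m

lemma sum_val_eq_card_level (s : Fin N → Fin 3) :
    ∑ n, (s n : ℕ) = #(level s 1) + 2 * #(level s 2) := by
  simp only [level, card_filter, mul_sum, ← sum_add_distrib]
  refine sum_congr rfl fun n _ => ?_
  have := (s n).isLt
  split_ifs <;> omega

section TwoColumns

variable (i j : Fin N)

def pairProfile (A : Fin N → Fin N → Bool) (n : Fin N) : Fin 3 :=
  ⟨(A n i).toNat + (A n j).toNat, by cases A n i <;> cases A n j <;> decide⟩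

def eraseInEdges (A : Fin N → Fin N → Bool) : Fin N → Fin N → Bool :=
  fun n v => if v = i ∨ v = j then false else A n v

def secondOnly (A : Fin N → Fin N → Bool) : Finset (Fin N) :=
  univ.filter fun n => A n i = false ∧ A n j = true

def attachInEdges (s : Fin N → Fin 3) (T : Finset (Fin N)) (B : Fin N → Fin N → Bool) :
    Fin N → Fin N → Bool :=
  fun n v =>
    if v = i then decide ((s n : ℕ) = 2 ∨ (s n : ℕ) = 1 ∧ n ∉ T)
    else if v = j then decide ((s n : ℕ) = 2 ∨ n ∈ T)
    else B n v

lemma inDeg_add_inDeg_eq_sum_pairProfile (A : Fin N → Fin N → Bool) :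
    inDeg A i + inDeg A j = ∑ n, (pairProfile i j A n : ℕ) := by
  simp [inDeg_eq_sum_toNat, pairProfile, sum_add_distrib]

lemma inDeg_eq_card_level_add_card_secondOnly (A : Fin N → Fin N → Bool) :
    inDeg A j = #(level (pairProfile i j A) 2) + #(secondOnly i j A) := by
  simp only [inDeg, level, secondOnly, card_filter, ← sum_add_distrib]
  refine sum_congr rfl fun n _ => ?_
  cases hi : A n i <;> cases hj : A n j <;> simp [pairProfile, hi, hj]

lemma secondOnly_subset_level (A : Fin N → Fin N → Bool) :
    secondOnly i j A ⊆ level (pairProfile i j A) 1 := by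
  intro n
  simp only [secondOnly, level, mem_filter, mem_univ, true_and]
  rintro ⟨hi, hj⟩
  simp [pairProfile, hi, hj]

lemma inDeg_eraseInEdges (A : Fin N → Fin N → Bool) (v : Fin N) :
    inDeg (eraseInEdges i j A) v = if v = i ∨ v = j then 0 else inDeg A v := by
  split_ifs with hv <;> simp [inDeg, eraseInEdges, hv]

lemma attachInEdges_pairProfile_secondOnly_eraseInEdges (A : Fin N → Fin N → Bool) :
    attachInEdges i j (pairProfile i j A) (secondOnly i j A) (eraseInEdges i j A) = A := by
  funext n v
  by_cases hi : v = i
  · subst hi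
    cases h₁ : A n v <;> cases h₂ : A n j <;>
      simp [attachInEdges, pairProfile, secondOnly, h₁, h₂]
  by_cases hj : v = j
  · subst hj
    cases h₁ : A n i <;> cases h₂ : A n v <;>
      simp [attachInEdges, pairProfile, secondOnly, hi, h₁, h₂]
  simp [attachInEdges, eraseInEdges, hi, hj]

variable {i j}

lemma outDeg_eq_outDeg_eraseInEdges_add (hij : i ≠ j) (A : Fin N → Fin N → Bool) (v : Fin N) :
    outDeg A v = outDeg (eraseInEdges i j A) v + pairProfile i j A v := by
  have hsplit (u : Fin N) : (A v u).toNat = (eraseInEdges i j A v u).toNat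
      + (if u = i then (A v i).toNat else 0) + (if u = j then (A v j).toNat else 0) := by
    by_cases hi : u = i <;> by_cases hj : u = j <;> simp_all [eraseInEdges]
  rw [outDeg_eq_sum_toNat, outDeg_eq_sum_toNat, sum_congr rfl fun u _ => hsplit u]
  simp [sum_add_distrib, pairProfile, add_assoc]

variable {s : Fin N → Fin 3} {T : Finset (Fin N)} {B : Fin N → Fin N → Bool}

lemma val_eq_one_of_mem_level (hT : T ⊆ level s 1) {n : Fin N} (hn : n ∈ T) :
    (s n : ℕ) = 1 := by
  simpa [level] using hT hn

lemma pairProfile_attachInEdges (hij : i ≠ j) (hT : T ⊆ level s 1) :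
    pairProfile i j (attachInEdges i j s T B) = s := by
  funext n
  apply Fin.ext
  have := (s n).isLt
  by_cases hn : n ∈ T
  · simp [pairProfile, attachInEdges, hij.symm, hn, val_eq_one_of_mem_level hT hn]
  · rcases (by omega : (s n : ℕ) = 0 ∨ (s n : ℕ) = 1 ∨ (s n : ℕ) = 2) with h | h | h <;>
      simp [pairProfile, attachInEdges, hij.symm, hn, h]

lemma secondOnly_attachInEdges (hij : i ≠ j) (hT : T ⊆ level s 1) :
    secondOnly i j (attachInEdges i j s T B) = T := by
  ext n
  by_cases hn : n ∈ T
  · simp [secondOnly, attachInEdges, hij.symm, hn, val_eq_one_of_mem_level hT hn]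
  · simp +contextual [secondOnly, attachInEdges, hij.symm, hn]

lemma eraseInEdges_attachInEdges (hB : ∀ n, B n i = false ∧ B n j = false) :
    eraseInEdges i j (attachInEdges i j s T B) = B := by
  funext n v
  by_cases hi : v = i
  · simp [eraseInEdges, hi, (hB n).1]
  by_cases hj : v = j
  · simp [eraseInEdges, hj, (hB n).2]
  simp [eraseInEdges, attachInEdges, hi, hj]

variable (a b : Fin N → ℕ) {A : Fin N → Fin N → Bool}

lemma mem_realizations_iff (hij : i ≠ j) (hs : pairProfile i j A = s)
    (hsum : ∑ n, (s n : ℕ) = a i + a j) :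
    A ∈ realizations (fun n => (a n : ℤ)) (fun n => (b n : ℤ)) ↔
      #(level s 2) + #(secondOnly i j A) = a j ∧
      eraseInEdges i j A ∈ realizations (fun n => if n = i ∨ n = j then 0 else (a n : ℤ))
        (fun n => (b n : ℤ) - ((s n : ℕ) : ℤ)) := by
  have hin := inDeg_add_inDeg_eq_sum_pairProfile i j A
  have hinj := inDeg_eq_card_level_add_card_secondOnly i j A
  have hout := outDeg_eq_outDeg_eraseInEdges_add hij A
  rw [hs] at hin hinj hout
  simp only [realizations, mem_filter, mem_univ, true_and, inDeg_eraseInEdges]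
  constructor
  · intro hA
    refine ⟨by have := (hA j).1; omega, fun v => ⟨?_, ?_⟩⟩
    · split_ifs
      · rfl
      · exact (hA v).1
    · have := (hA v).2; have := hout v; omega
  · rintro ⟨hj, hB⟩ v
    refine ⟨?_, by have := (hB v).2; have := hout v; omega⟩
    by_cases hvi : v = i
    · subst hvi; omega
    by_cases hvj : v = j
    · subst hvj; omega
    simpa [hvi, hvj] using (hB v).1

lemma card_level_le_and_sum_eq_of_mem_realizations (hs : pairProfile i j A = s)
    (hA : A ∈ realizations (fun n => (a n : ℤ)) (fun n => (b n : ℤ))) :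
    #(level s 2) ≤ a j ∧ ∑ n, (s n : ℕ) = a i + a j := by
  have hin := inDeg_add_inDeg_eq_sum_pairProfile i j A
  have hinj := inDeg_eq_card_level_add_card_secondOnly i j A
  rw [hs] at hin hinj
  simp only [realizations, mem_filter, mem_univ, true_and] at hA
  have := (hA i).1; have := (hA j).1
  omega

lemma eq_false_of_mem_realizations_residual {c : Fin N → ℤ}
    (hB : B ∈ realizations (fun n => if n = i ∨ n = j then 0 else (a n : ℤ)) c) (n : Fin N) :
    B n i = false ∧ B n j = false := by
  simp only [realizations, mem_filter, mem_univ, true_and] at hB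
  have hi : inDeg B i = 0 := by simpa using (hB i).1
  have hj : inDeg B j = 0 := by simpa using (hB j).1
  exact ⟨inDeg_eq_zero_iff.1 hi n, inDeg_eq_zero_iff.1 hj n⟩

theorem card_filter_realizations_pairProfile_eq (hij : i ≠ j) (s : Fin N → Fin 3) :
    #((realizations (fun n => (a n : ℤ)) (fun n => (b n : ℤ))).filter
        (pairProfile i j · = s)) =
      if #(level s 2) ≤ a j ∧ ∑ n, (s n : ℕ) = a i + a j then
        (a i + a j - 2 * #(level s 2)).choose (a j - #(level s 2)) *
          numGraphsZ (fun n => if n = i ∨ n = j then 0 else (a n : ℤ))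
            (fun n => (b n : ℤ) - ((s n : ℕ) : ℤ))
      else 0 := by
  split_ifs with hs
  · obtain ⟨htwos, hsum⟩ := hs
    have hones : #(level s 1) = a i + a j - 2 * #(level s 2) := by
      have := sum_val_eq_card_level s; omega
    rw [numGraphsZ_eq_card_realizations, ← hones, ← card_powersetCard, ← card_product]
    refine card_nbij' (fun A => (secondOnly i j A, eraseInEdges i j A))
      (fun p => attachInEdges i j s p.1 p.2) ?_ ?_ ?_ ?_
    · intro A hA
      rw [mem_coe, mem_filter] at hA
      obtain ⟨hcard, hres⟩ := (mem_realizations_iff a b hij hA.2 hsum).1 hA.1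
      simp only [coe_product, Set.mem_prod, mem_coe, mem_powersetCard]
      exact ⟨⟨hA.2 ▸ secondOnly_subset_level i j A, by omega⟩, hres⟩
    · rintro ⟨T, B⟩ hTB
      simp only [coe_product, Set.mem_prod, mem_coe, mem_powersetCard] at hTB
      obtain ⟨⟨hT, hcard⟩, hB⟩ := hTB
      have hB₀ := eq_false_of_mem_realizations_residual a hB
      have hs := pairProfile_attachInEdges (B := B) hij hT
      rw [mem_coe, mem_filter]
      refine ⟨(mem_realizations_iff a b hij hs hsum).2 ⟨?_, ?_⟩, hs⟩
      · rw [secondOnly_attachInEdges hij hT]; omega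
      · rwa [eraseInEdges_attachInEdges hB₀]
    · intro A hA
      rw [mem_coe, mem_filter] at hA
      have := attachInEdges_pairProfile_secondOnly_eraseInEdges i j A
      rwa [hA.2] at this
    · rintro ⟨T, B⟩ hTB
      simp only [coe_product, Set.mem_prod, mem_coe, mem_powersetCard] at hTB
      obtain ⟨⟨hT, -⟩, hB⟩ := hTB
      simp [secondOnly_attachInEdges hij hT,
        eraseInEdges_attachInEdges (eq_false_of_mem_realizations_residual a hB)]
  · rw [card_eq_zero, filter_eq_empty_iff]
    intro A hA hAs
    exact hs (card_level_le_and_sum_eq_of_mem_realizations a b hAs hA)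

end TwoColumns

end

theorem stmt_2_general (N : ℕ) (a b : Fin N → ℕ) (i j : Fin N) (hij : i ≠ j) :
    numGraphsZ (fun n => (a n : ℤ)) (fun n => (b n : ℤ)) =
    ∑ k ∈ Finset.range (a j + 1),
      Nat.choose (a i + a j - 2 * k) (a j - k) *
        ∑ s : Fin N → Fin 3,
          (if (Finset.univ.filter (fun n => (s n : ℕ) = 2)).card = k ∧
              (∑ n, (s n : ℕ)) = a i + a j
           then numGraphsZ
                  (fun n => if n = i ∨ n = j then 0 else (a n : ℤ))
                  (fun n => (b n : ℤ) - ((s n : ℕ) : ℤ))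
           else 0) := by
  rw [numGraphsZ_eq_card_realizations,
    card_eq_sum_card_fiberwise (f := pairProfile i j) (t := univ) fun _ _ => mem_univ _]
  simp only [card_filter_realizations_pairProfile_eq a b hij, mul_sum]
  rw [sum_comm]
  refine sum_congr rfl fun s _ => ?_
  simp only [mul_ite, mul_zero, ite_and, sum_ite_eq, mem_range, Nat.lt_succ_iff]
  rfl

/-- Theorem 1 (partitioning): for a bidegree sequence `d = (a,b)` and nodes
`i ≠ j` with `a j ≤ a i`,
`‖G_d‖ = ∑_{k=0}^{a_j} C(a_i + a_j - 2k, a_j - k) ‖G_{X_k}‖`, where `X_k`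
consists of the residual sequences `(a - a_i e_i - a_j e_j, b - s)` with
`s : Fin N → {0,1,2}` having exactly `k` entries equal to `2` and
`∑ s = a_i + a_j`. -/
theorem stmt_2 (N : ℕ) (a b : Fin N → ℕ) (i j : Fin N) (hij : i ≠ j)
    (h : a j ≤ a i) :
    numGraphsZ (fun n => (a n : ℤ)) (fun n => (b n : ℤ)) =
    ∑ k ∈ Finset.range (a j + 1),
      Nat.choose (a i + a j - 2 * k) (a j - k) *
        ∑ s : Fin N → Fin 3,
          (if (Finset.univ.filter (fun n => (s n : ℕ) = 2)).card = k ∧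
              (∑ n, (s n : ℕ)) = a i + a j
           then numGraphsZ
                  (fun n => if n = i ∨ n = j then 0 else (a n : ℤ))
                  (fun n => (b n : ℤ) - ((s n : ℕ) : ℤ))
           else 0) :=
  stmt_2_general N a b i j hij
end

section
/- Let d = (a,b) with Σ a_n = Σ b_n + 1 and indices i, j with a_j < a_i - 1. Set d_{-i} = (a - e_i, b), d_{-j} = (a - e_j, b), and let X_k (0 ≤ k ≤ a_j) be defined as in the partition theorem from d. Define η_k = ‖G_{X_k}‖ / ( [∏_{l=0}^{2k-1} (a_i + a_j - l - 1)] · ‖G_{X_0}‖ ) for k ≤ ⌊(a_i + a_j - 1)/2⌋ (assuming ‖G_{X_0}‖ > 0). Then ‖G_{d_{-i}}‖ / ‖G_{d_{-j}}‖ = (a_i/a_j) · ( Σ_{k=0}^{a_j} [∏_{l=0}^{k-1}(a_j - l)][∏_{l=1}^{k}(a_i - l)] η_k ) / ( Σ_{k=0}^{a_j - 1} [∏_{l=1}^{k}(a_j - l)][∏_{l=0}^{k-1}(a_i - l)] η_k ). -/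
/-- `‖G_{X_k}‖`: the number of graphs realizing some residual sequence
`(a - a_i e_i - a_j e_j, b - s)` where `s : Fin N → {0,1,2}` has exactly `k`
entries equal to `2` and `∑ s = a_i + a_j - 1` (the common in-degree sum of
`d_{-i}` and `d_{-j}`). -/
noncomputable def GX {N : ℕ} (a b : Fin N → ℕ) (i j : Fin N) (k : ℕ) : ℕ :=
  ∑ s : Fin N → Fin 3,
    (if (Finset.univ.filter (fun n => (s n : ℕ) = 2)).card = k ∧
        (∑ n, (s n : ℕ)) + 1 = a i + a j
     then numGraphsZ
            (fun n => if n = i ∨ n = j then 0 else (a n : ℤ))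
            (fun n => (b n : ℤ) - ((s n : ℕ) : ℤ))
     else 0)

/-
Condition a graph on its columns `i` and `j`. Deleting these two columns leaves a graph realizing
the residual sequence `(a - a_i e_i - a_j e_j, b - s)`, where `s_n ∈ {0, 1, 2}` counts the edges
from `n` into `{i, j}`. Conversely, if `s` has `t` entries `2`, `o` entries `1` and sum `p + q`,
a residual graph extends in exactly `C(o, q - t)` ways to one whose columns `i` and `j` have
sizes `p` and `q`: choose which `1`-entries go to column `j`. Grouping by `t`, with
`n = a_i + a_j - 1`,
  ‖G_{d_{-i}}‖ = ∑_k C(n - 2k, a_j - k) ‖G_{X_k}‖,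
  ‖G_{d_{-j}}‖ = ∑_k C(n - 2k, a_j - 1 - k) ‖G_{X_k}‖,
and `C(n - 2k, q - k) · n(n-1)⋯(n-2k+1) = C(n, q) · q(q-1)⋯(q-k+1) · (n-q)⋯(n-q-k+1)` turns
both into `C(n, q) ‖G_{X_0}‖ ∑_k (⋯) η_k`. The ratio `C(n, a_j) / C(n, a_j - 1)` is `a_i / a_j`.
-/

open Finset
open scoped Nat

lemma card_filter_eq_sum_toNat {α : Type*} [Fintype α] (c : α → Bool) :
    #{x | c x} = ∑ x, (c x).toNat := by
  rw [card_filter]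
  exact sum_congr rfl fun x _ => by cases c x <;> rfl

variable {N : ℕ}

section ColumnPairs

def colSum (c : (Fin N → Bool) × (Fin N → Bool)) : Fin N → Fin 3 :=
  fun n => ⟨(c.1 n).toNat + (c.2 n).toNat, by
    have := Bool.toNat_le (c.1 n); have := Bool.toNat_le (c.2 n); omega⟩

lemma colSum_val {c : (Fin N → Bool) × (Fin N → Bool)} {s : Fin N → Fin 3} (hc : colSum c = s)
    (n : Fin N) : (s n : ℕ) = (c.1 n).toNat + (c.2 n).toNat := by
  rw [← hc]; rfl

lemma sum_colSum_eq {c : (Fin N → Bool) × (Fin N → Bool)} {s : Fin N → Fin 3} (hc : colSum c = s) :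
    ∑ n, (s n : ℕ) = #{u | c.1 u} + #{u | c.2 u} := by
  simp only [colSum_val hc, card_filter_eq_sum_toNat, sum_add_distrib]

lemma card_snd_eq_of_colSum_eq {c : (Fin N → Bool) × (Fin N → Bool)} {s : Fin N → Fin 3}
    (hc : colSum c = s) :
    #{u | c.2 u} = #{n | (s n : ℕ) = 2} + #{n | (s n : ℕ) = 1 ∧ c.2 n} := by
  simp only [card_filter, ← sum_add_distrib]
  refine sum_congr rfl fun n _ => ?_
  have hn := colSum_val hc n
  revert hn
  cases c.1 n <;> cases c.2 n <;> intro hn <;> simp [hn]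

def colsOfOnes (s : Fin N → Fin 3) (T : Finset (Fin N)) : (Fin N → Bool) × (Fin N → Bool) :=
  (fun n => decide ((s n : ℕ) = 2 ∨ ((s n : ℕ) = 1 ∧ n ∉ T)),
    fun n => decide ((s n : ℕ) = 2 ∨ n ∈ T))

lemma colSum_colsOfOnes {s : Fin N → Fin 3} {T : Finset (Fin N)} (hT : ∀ n ∈ T, (s n : ℕ) = 1) :
    colSum (colsOfOnes s T) = s := by
  funext n
  apply Fin.ext
  have := (s n).isLt
  by_cases hn : n ∈ T
  · simp [colSum, colsOfOnes, hn, hT n hn]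
  · simp only [colSum, colsOfOnes, hn, or_false, Bool.toNat]
    interval_cases (s n : ℕ) <;> simp

lemma filter_snd_colsOfOnes {s : Fin N → Fin 3} {T : Finset (Fin N)}
    (hT : ∀ n ∈ T, (s n : ℕ) = 1) :
    ({n | (s n : ℕ) = 1 ∧ (colsOfOnes s T).2 n} : Finset (Fin N)) = T := by
  ext n
  simp only [colsOfOnes, mem_filter, mem_univ, true_and, decide_eq_true_eq]
  constructor
  · rintro ⟨h1, h2 | hn⟩
    · omega
    · exact hn
  · exact fun hn => ⟨hT n hn, Or.inr hn⟩

lemma card_colSum_fiber (s : Fin N → Fin 3) (p q : ℕ) :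
    #{c : (Fin N → Bool) × (Fin N → Bool) | colSum c = s ∧ #{u | c.1 u} = p ∧ #{u | c.2 u} = q} =
      if ∑ n, (s n : ℕ) = p + q ∧ #{n | (s n : ℕ) = 2} ≤ q then
        (#{n | (s n : ℕ) = 1}).choose (q - #{n | (s n : ℕ) = 2})
      else 0 := by
  split_ifs with hs
  · rw [← card_powersetCard]
    refine card_bij' (fun c _ => ({n | (s n : ℕ) = 1 ∧ c.2 n} : Finset (Fin N)))
      (fun T _ => colsOfOnes s T) ?_ ?_ ?_ ?_
    · simp only [mem_filter, mem_univ, true_and, mem_powersetCard]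
      rintro c ⟨hc, -, hq⟩
      refine ⟨fun n => by simp only [mem_filter, mem_univ, true_and]; exact And.left, ?_⟩
      have := card_snd_eq_of_colSum_eq hc
      omega
    · simp only [mem_filter, mem_univ, true_and, mem_powersetCard]
      rintro T ⟨hT, hTcard⟩
      replace hT : ∀ n ∈ T, (s n : ℕ) = 1 := fun n hn => by simpa using hT hn
      have hc := colSum_colsOfOnes hT
      have hsnd := card_snd_eq_of_colSum_eq hc
      have hsum := sum_colSum_eq hc
      rw [filter_snd_colsOfOnes hT] at hsnd
      refine ⟨hc, ?_, ?_⟩ <;> omega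
    · simp only [mem_filter, mem_univ, true_and]
      rintro c ⟨hc, -⟩
      have hn := colSum_val hc
      ext n <;> specialize hn n <;> cases h₁ : c.1 n <;> cases h₂ : c.2 n <;> simp_all [colsOfOnes]
    · simp only [mem_powersetCard]
      rintro T ⟨hT, -⟩
      exact filter_snd_colsOfOnes fun n hn => by simpa using hT hn
  · refine card_eq_zero.mpr (filter_eq_empty_iff.mpr ?_)
    rintro c - ⟨hc, hp, hq⟩
    have := card_snd_eq_of_colSum_eq hc
    exact hs ⟨by rw [sum_colSum_eq hc, hp, hq], by omega⟩

end ColumnPairs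

section ColumnSurgery

variable (i j : Fin N)

def clearCols (A : Fin N → Fin N → Bool) : Fin N → Fin N → Bool :=
  fun u v => if v = i ∨ v = j then false else A u v

def setCols (c₁ c₂ : Fin N → Bool) (A : Fin N → Fin N → Bool) : Fin N → Fin N → Bool :=
  fun u v => if v = i then c₁ u else if v = j then c₂ u else A u v

variable {i j}

lemma inDeg_clearCols (A : Fin N → Fin N → Bool) (v : Fin N) :
    inDeg (clearCols i j A) v = if v = i ∨ v = j then 0 else inDeg A v := by
  unfold inDeg clearCols
  split_ifs <;> simp

lemma inDeg_setCols (c₁ c₂ : Fin N → Bool) (A : Fin N → Fin N → Bool) (v : Fin N) :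
    inDeg (setCols i j c₁ c₂ A) v =
      if v = i then #{u | c₁ u} else if v = j then #{u | c₂ u} else inDeg A v := by
  unfold inDeg setCols
  split_ifs <;> rfl

lemma outDeg_setCols (hij : i ≠ j) (c₁ c₂ : Fin N → Bool) {A : Fin N → Fin N → Bool}
    (hAi : ∀ u, A u i = false) (hAj : ∀ u, A u j = false) (u : Fin N) :
    outDeg (setCols i j c₁ c₂ A) u = outDeg A u + (c₁ u).toNat + (c₂ u).toNat := by
  have hentry : ∀ v, (setCols i j c₁ c₂ A u v).toNat =
      (A u v).toNat + (if v = i then (c₁ u).toNat else 0) +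
        (if v = j then (c₂ u).toNat else 0) := by
    intro v
    by_cases hvi : v = i
    · subst hvi; simp [setCols, hAi, hij]
    · by_cases hvj : v = j
      · subst hvj; simp [setCols, hvi, hAj]
      · simp [setCols, hvi, hvj]
  simp only [outDeg, card_filter_eq_sum_toNat, hentry, sum_add_distrib, sum_ite_eq', mem_univ,
    if_true]

lemma setCols_clearCols {c₁ c₂ : Fin N → Bool} {A : Fin N → Fin N → Bool}
    (hAi : ∀ u, A u i = c₁ u) (hAj : ∀ u, A u j = c₂ u) :
    setCols i j c₁ c₂ (clearCols i j A) = A := by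
  funext u v
  by_cases hvi : v = i
  · subst hvi; simp [setCols, hAi]
  · by_cases hvj : v = j
    · subst hvj; simp [setCols, hvi, hAj]
    · simp [setCols, clearCols, hvi, hvj]

lemma clearCols_setCols (c₁ c₂ : Fin N → Bool) {A : Fin N → Fin N → Bool}
    (hAi : ∀ u, A u i = false) (hAj : ∀ u, A u j = false) :
    clearCols i j (setCols i j c₁ c₂ A) = A := by
  funext u v
  by_cases hv : v = i ∨ v = j
  · rcases hv with rfl | rfl <;> simp [clearCols, hAi, hAj]
  · simp [clearCols, setCols, not_or.mp hv]

lemma eq_false_of_inDeg_eq_zero {A : Fin N → Fin N → Bool} {v : Fin N} (hv : inDeg A v = 0)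
    (u : Fin N) : A u v = false := by
  simp only [inDeg, card_eq_zero, filter_eq_empty_iff, mem_univ, true_implies,
    Bool.not_eq_true] at hv
  exact @hv u


lemma degrees_clearCols (hij : i ≠ j) {d b : Fin N → ℕ} {c₁ c₂ : Fin N → Bool}
    {A : Fin N → Fin N → Bool} (hA : ∀ v, inDeg A v = d v ∧ outDeg A v = b v)
    (hAi : ∀ u, A u i = c₁ u) (hAj : ∀ u, A u j = c₂ u) (v : Fin N) :
    (inDeg (clearCols i j A) v : ℤ) = (if v = i ∨ v = j then 0 else (d v : ℤ)) ∧
      (outDeg (clearCols i j A) v : ℤ) = b v - ((c₁ v).toNat + (c₂ v).toNat : ℕ) := by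
  have hout := outDeg_setCols hij c₁ c₂ (A := clearCols i j A) (by simp [clearCols])
    (by simp [clearCols]) v
  rw [setCols_clearCols hAi hAj, (hA v).2] at hout
  refine ⟨?_, by omega⟩
  rw [inDeg_clearCols]
  split_ifs
  · rfl
  · rw [(hA v).1]

lemma degrees_setCols (hij : i ≠ j) {d b : Fin N → ℕ} {c₁ c₂ : Fin N → Bool}
    (hc₁ : #{u | c₁ u} = d i) (hc₂ : #{u | c₂ u} = d j) {A : Fin N → Fin N → Bool}
    (hA : ∀ v, (inDeg A v : ℤ) = (if v = i ∨ v = j then 0 else (d v : ℤ)) ∧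
      (outDeg A v : ℤ) = b v - ((c₁ v).toNat + (c₂ v).toNat : ℕ)) (v : Fin N) :
    inDeg (setCols i j c₁ c₂ A) v = d v ∧ outDeg (setCols i j c₁ c₂ A) v = b v := by
  have hAi := eq_false_of_inDeg_eq_zero (by simpa using (hA i).1)
  have hAj := eq_false_of_inDeg_eq_zero (by simpa using (hA j).1)
  refine ⟨?_, ?_⟩
  · rw [inDeg_setCols]
    split_ifs with hvi hvj
    · rw [hvi, hc₁]
    · rw [hvj, hc₂]
    · have := (hA v).1
      rw [if_neg (by tauto)] at this
      omega
  · rw [outDeg_setCols hij c₁ c₂ hAi hAj]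
    have := (hA v).2
    omega

lemma card_filter_cols_eq (hij : i ≠ j) (d b : Fin N → ℕ) (c : (Fin N → Bool) × (Fin N → Bool)) :
    #{A | (∀ v, inDeg A v = d v ∧ outDeg A v = b v) ∧
        ((fun u => A u i, fun u => A u j) : (Fin N → Bool) × (Fin N → Bool)) = c} =
      if #{u | c.1 u} = d i ∧ #{u | c.2 u} = d j then
        numGraphsZ (fun v => if v = i ∨ v = j then 0 else (d v : ℤ))
          (fun v => (b v : ℤ) - (colSum c v : ℕ))
      else 0 := by
  obtain ⟨c₁, c₂⟩ := c
  have hcolSum : ∀ v, (colSum (c₁, c₂) v : ℕ) = (c₁ v).toNat + (c₂ v).toNat := fun _ => rfl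
  simp only [Prod.mk.injEq, funext_iff, hcolSum]
  split_ifs with hc
  · rw [numGraphsZ, Nat.card_eq_fintype_card, Fintype.card_subtype]
    refine card_bij' (fun A _ => clearCols i j A) (fun A _ => setCols i j c₁ c₂ A) ?_ ?_ ?_ ?_
    · simp only [mem_filter, mem_univ, true_and]
      rintro A ⟨hA, hAi, hAj⟩
      exact degrees_clearCols hij hA hAi hAj
    · simp only [mem_filter, mem_univ, true_and]
      intro A hA
      exact ⟨degrees_setCols hij hc.1 hc.2 hA, fun u => by simp [setCols],
        fun u => by simp [setCols, hij.symm]⟩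
    · simp only [mem_filter, mem_univ, true_and]
      rintro A ⟨-, hAi, hAj⟩
      exact setCols_clearCols hAi hAj
    · simp only [mem_filter, mem_univ, true_and]
      intro A hA
      exact clearCols_setCols c₁ c₂
        (eq_false_of_inDeg_eq_zero (by simpa using (hA i).1))
        (eq_false_of_inDeg_eq_zero (by simpa using (hA j).1))
  · refine card_eq_zero.mpr (filter_eq_empty_iff.mpr ?_)
    rintro A - ⟨hA, hAi, hAj⟩
    refine hc ⟨?_, ?_⟩
    · rw [← (hA i).1]; simp only [inDeg, hAi]
    · rw [← (hA j).1]; simp only [inDeg, hAj]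

end ColumnSurgery

lemma numGraphs_eq_sum_colSum {i j : Fin N} (hij : i ≠ j) (a b : Fin N → ℕ) (p q : ℕ) :
    numGraphs (fun n => if n = i then p else if n = j then q else a n) b =
      ∑ s : Fin N → Fin 3,
        (if ∑ n, (s n : ℕ) = p + q ∧ #{n | (s n : ℕ) = 2} ≤ q then
          (#{n | (s n : ℕ) = 1}).choose (q - #{n | (s n : ℕ) = 2})
        else 0) *
        numGraphsZ (fun n => if n = i ∨ n = j then 0 else (a n : ℤ))
          (fun n => (b n : ℤ) - ((s n : ℕ) : ℤ)) := by
  set d : Fin N → ℕ := fun n => if n = i then p else if n = j then q else a n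
  have hd : (fun n => if n = i ∨ n = j then 0 else (d n : ℤ)) =
      fun n => if n = i ∨ n = j then 0 else (a n : ℤ) := by
    funext n
    by_cases hn : n = i ∨ n = j
    · simp only [hn, if_true]
    · simp only [d, not_or.mp hn, if_false]
  have hfiber : ∀ c : (Fin N → Bool) × (Fin N → Bool),
      #{A ∈ {A : Fin N → Fin N → Bool | ∀ v, inDeg A v = d v ∧ outDeg A v = b v} |
          ((fun u => A u i, fun u => A u j) : (Fin N → Bool) × (Fin N → Bool)) = c} =
        if #{u | c.1 u} = p ∧ #{u | c.2 u} = q then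
          numGraphsZ (fun n => if n = i ∨ n = j then 0 else (a n : ℤ))
            (fun v => (b v : ℤ) - (colSum c v : ℕ))
        else 0 := by
    intro c
    rw [filter_filter, card_filter_cols_eq hij, hd]
    simp only [d, if_pos rfl, if_neg hij.symm, if_true]
  rw [numGraphs, Nat.card_eq_fintype_card, Fintype.card_subtype,
    card_eq_sum_card_fiberwise (t := univ)
      (f := fun A : Fin N → Fin N → Bool =>
        ((fun u => A u i, fun u => A u j) : (Fin N → Bool) × (Fin N → Bool)))
      (fun A _ => mem_univ _)]
  rw [sum_congr rfl fun c _ => hfiber c]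
  rw [← sum_fiberwise_of_maps_to (g := colSum) (t := univ) (fun c _ => mem_univ _)]
  refine sum_congr rfl fun s _ => ?_
  rw [← card_colSum_fiber, card_filter, sum_mul, sum_filter]
  refine sum_congr rfl fun c _ => ?_
  split_ifs <;> simp_all

lemma sum_fin_three_eq {α : Type*} [Fintype α] (s : α → Fin 3) :
    ∑ n, (s n : ℕ) = #{n | (s n : ℕ) = 1} + 2 * #{n | (s n : ℕ) = 2} := by
  simp only [card_filter, mul_sum, ← sum_add_distrib]
  refine sum_congr rfl fun n _ => ?_
  have := (s n).isLt
  interval_cases (s n : ℕ) <;> rfl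

lemma numGraphs_eq_sum_GX {i j : Fin N} (hij : i ≠ j) (a b : Fin N → ℕ) {p q : ℕ}
    (hpq : p + q + 1 = a i + a j) :
    numGraphs (fun n => if n = i then p else if n = j then q else a n) b =
      ∑ k ∈ range (q + 1), (p + q - 2 * k).choose (q - k) * GX a b i j k := by
  rw [numGraphs_eq_sum_colSum hij]
  unfold GX
  simp only [mul_sum, mul_ite, mul_zero, ite_and]
  rw [sum_comm]
  refine sum_congr rfl fun s _ => ?_
  rw [sum_ite_eq]
  simp only [mem_range, Nat.lt_succ_iff]
  have hs := sum_fin_three_eq s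
  set t := #{n | (s n : ℕ) = 2}
  set o := #{n | (s n : ℕ) = 1}
  split_ifs <;> first | (exfalso; omega) | rw [show o = p + q - 2 * t by omega] | rw [zero_mul]

lemma choose_sub_two_mul_mul_descFactorial {p q k : ℕ} (hp : k ≤ p) (hq : k ≤ q) :
    (p + q - 2 * k).choose (q - k) * (p + q).descFactorial (2 * k) =
      (p + q).choose q * q.descFactorial k * p.descFactorial k := by
  apply Nat.eq_of_mul_eq_mul_right (Nat.mul_pos (q - k).factorial_pos (p - k).factorial_pos)
  have h₁ := Nat.choose_mul_factorial_mul_factorial (n := p + q - 2 * k) (k := q - k) (by omega)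
  have h₂ := Nat.factorial_mul_descFactorial (n := p + q) (k := 2 * k) (by omega)
  have h₃ := Nat.choose_mul_factorial_mul_factorial (n := p + q) (k := q) (by omega)
  have h₄ := Nat.factorial_mul_descFactorial hq
  have h₅ := Nat.factorial_mul_descFactorial hp
  rw [show p + q - 2 * k - (q - k) = p - k by omega] at h₁
  rw [Nat.add_sub_cancel] at h₃
  calc (p + q - 2 * k).choose (q - k) * (p + q).descFactorial (2 * k) * ((q - k)! * (p - k)!)
      = (p + q - 2 * k).choose (q - k) * (q - k)! * (p - k)! * (p + q).descFactorial (2 * k) := by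
        ring
    _ = (p + q).choose q * q ! * p ! := by rw [h₁, h₂, h₃]
    _ = (p + q).choose q * q.descFactorial k * p.descFactorial k * ((q - k)! * (p - k)!) := by
        rw [← h₄, ← h₅]; ring

lemma numGraphs_eq_choose_mul_sum {i j : Fin N} (hij : i ≠ j) (a b : Fin N → ℕ) {p q : ℕ}
    (hqp : q ≤ p) (hpq : p + q + 1 = a i + a j) (hGX₀ : GX a b i j 0 ≠ 0) :
    (numGraphs (fun n => if n = i then p else if n = j then q else a n) b : ℝ) =
      (a i + a j - 1).choose q * GX a b i j 0 *
        ∑ k ∈ range (q + 1), (q.descFactorial k : ℝ) * p.descFactorial k *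
          (GX a b i j k / ((a i + a j - 1).descFactorial (2 * k) * GX a b i j 0)) := by
  rw [numGraphs_eq_sum_GX hij a b hpq, show a i + a j - 1 = p + q by omega, mul_sum]
  push_cast
  refine sum_congr rfl fun k hk => ?_
  have hkq : k ≤ q := Nat.lt_succ_iff.mp (mem_range.mp hk)
  have hdesc : ((p + q).descFactorial (2 * k) : ℝ) ≠ 0 := by
    exact_mod_cast (Nat.descFactorial_pos.mpr (by omega)).ne'
  have hGX₀' : (GX a b i j 0 : ℝ) ≠ 0 := by exact_mod_cast hGX₀
  have key : ((p + q - 2 * k).choose (q - k) : ℝ) * (p + q).descFactorial (2 * k) =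
      (p + q).choose q * q.descFactorial k * p.descFactorial k := by
    exact_mod_cast choose_sub_two_mul_mul_descFactorial (by omega) hkq
  field_simp
  linear_combination (GX a b i j k : ℝ) * key

lemma choose_div_choose_sub_one {p q : ℕ} (hq : 0 < q) :
    ((p + q - 1).choose q : ℝ) / (p + q - 1).choose (q - 1) = p / q := by
  have hsucc := Nat.choose_succ_right_eq (p + q - 1) (q - 1)
  rw [Nat.sub_add_cancel hq, show p + q - 1 - (q - 1) = p by omega] at hsucc
  rw [div_eq_div_iff (by exact_mod_cast (Nat.choose_pos (by omega)).ne') (by exact_mod_cast hq.ne')]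
  exact_mod_cast hsucc.trans (mul_comm _ _)

theorem stmt_5_general (N : ℕ) (a b : Fin N → ℕ) (i j : Fin N) (hij : i ≠ j)
    (hj : 0 < a j) (h : a j + 1 < a i)
    (hGX0 : 0 < GX a b i j 0) :
    (numGraphs (fun n => if n = i then a i - 1 else a n) b : ℝ) /
      (numGraphs (fun n => if n = j then a j - 1 else a n) b : ℝ) =
    ((a i : ℝ) / (a j : ℝ)) *
      ((∑ k ∈ Finset.range (a j + 1),
          (∏ l ∈ Finset.range k, ((a j : ℝ) - l)) *
          (∏ l ∈ Finset.range k, ((a i : ℝ) - (l + 1))) *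
          ((GX a b i j k : ℝ) /
            ((∏ l ∈ Finset.range (2 * k), ((a i : ℝ) + (a j : ℝ) - l - 1)) *
              (GX a b i j 0 : ℝ)))) /
       (∑ k ∈ Finset.range (a j),
          (∏ l ∈ Finset.range k, ((a j : ℝ) - (l + 1))) *
          (∏ l ∈ Finset.range k, ((a i : ℝ) - l)) *
          ((GX a b i j k : ℝ) /
            ((∏ l ∈ Finset.range (2 * k), ((a i : ℝ) + (a j : ℝ) - l - 1)) *
              (GX a b i j 0 : ℝ))))) := by
  have hi_sub : ∀ l : ℕ, (a i : ℝ) - (l + 1) = ((a i - 1 : ℕ) : ℝ) - l := fun l => by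
    push_cast [Nat.cast_sub (by omega : 1 ≤ a i)]; ring
  have hj_sub : ∀ l : ℕ, (a j : ℝ) - (l + 1) = ((a j - 1 : ℕ) : ℝ) - l := fun l => by
    push_cast [Nat.cast_sub (by omega : 1 ≤ a j)]; ring
  have hij_sub : ∀ l : ℕ, (a i : ℝ) + a j - l - 1 = ((a i + a j - 1 : ℕ) : ℝ) - l := fun l => by
    push_cast [Nat.cast_sub (by omega : 1 ≤ a i + a j)]; ring
  simp only [hi_sub, hj_sub, hij_sub, prod_range_natCast_sub, ← Nat.descFactorial_eq_prod_range]
  have hremove_i : (fun n => if n = i then a i - 1 else a n) =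
      fun n => if n = i then a i - 1 else if n = j then a j else a n := by
    funext n; split_ifs <;> simp_all
  have hremove_j : (fun n => if n = j then a j - 1 else a n) =
      fun n => if n = i then a i else if n = j then a j - 1 else a n := by
    funext n; split_ifs <;> simp_all
  have hnum_i := numGraphs_eq_choose_mul_sum hij a b (p := a i - 1) (q := a j) (by omega) (by omega)
    hGX0.ne'
  have hnum_j := numGraphs_eq_choose_mul_sum hij a b (p := a i) (q := a j - 1) (by omega) (by omega)
    hGX0.ne'
  rw [← hremove_i] at hnum_i
  rw [← hremove_j, Nat.sub_add_cancel hj] at hnum_j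
  have hGX0' : (GX a b i j 0 : ℝ) ≠ 0 := by exact_mod_cast hGX0.ne'
  rw [hnum_i, hnum_j, mul_div_mul_comm, mul_div_mul_right _ _ hGX0',
    choose_div_choose_sub_one hj]

/-- Corollary 2: with `∑ a = ∑ b + 1`, `0 < a_j` and `a_j < a_i - 1`, setting
`η_k = ‖G_{X_k}‖ / (∏_{l=0}^{2k-1}(a_i + a_j - l - 1) · ‖G_{X_0}‖)`,
`‖G_{d_{-i}}‖ / ‖G_{d_{-j}}‖ = (a_i/a_j) ·
 (∑_{k=0}^{a_j} ∏_{l=0}^{k-1}(a_j - l) ∏_{l=1}^{k}(a_i - l) η_k) /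
 (∑_{k=0}^{a_j-1} ∏_{l=1}^{k}(a_j - l) ∏_{l=0}^{k-1}(a_i - l) η_k)`. -/
theorem stmt_5 (N : ℕ) (a b : Fin N → ℕ) (i j : Fin N) (hij : i ≠ j)
    (hsum : ∑ n, a n = (∑ n, b n) + 1)
    (hj : 0 < a j) (h : a j + 1 < a i)
    (hGX0 : 0 < GX a b i j 0)
    (hden : 0 < numGraphs (fun n => if n = j then a j - 1 else a n) b) :
    (numGraphs (fun n => if n = i then a i - 1 else a n) b : ℝ) /
      (numGraphs (fun n => if n = j then a j - 1 else a n) b : ℝ) =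
    ((a i : ℝ) / (a j : ℝ)) *
      ((∑ k ∈ Finset.range (a j + 1),
          (∏ l ∈ Finset.range k, ((a j : ℝ) - l)) *
          (∏ l ∈ Finset.range k, ((a i : ℝ) - (l + 1))) *
          ((GX a b i j k : ℝ) /
            ((∏ l ∈ Finset.range (2 * k), ((a i : ℝ) + (a j : ℝ) - l - 1)) *
              (GX a b i j 0 : ℝ)))) /
       (∑ k ∈ Finset.range (a j),
          (∏ l ∈ Finset.range k, ((a j : ℝ) - (l + 1))) *
          (∏ l ∈ Finset.range k, ((a i : ℝ) - l)) *
          ((GX a b i j k : ℝ) /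
            ((∏ l ∈ Finset.range (2 * k), ((a i : ℝ) + (a j : ℝ) - l - 1)) *
              (GX a b i j 0 : ℝ))))) :=
  stmt_5_general N a b i j hij hj h hGX0
end

section
/- Consider a degree sequence a = (a_1, a_2, 2, ..., 2, 1, ..., 1, 0, ..., 0) ∈ ℤ^N for an undirected loopless simple graph, where 2 appears q_2 times, 1 appears q_1 times, and q_1 + 2q_2 = a_1 + a_2, with a_1, a_2 ≥ q_2. Then the number of undirected loopless simple graphs realizing a in which nodes 1 and 2 are not adjacent equals C(a_1 + a_2 - 2q_2, a_1 - q_2). -/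
/-!
Nodes `0` and `1` (the paper's nodes 1 and 2) can only be adjacent to the `q₂ + q₁` nodes of
degree 2 and 1, whose degrees add up to `2q₂ + q₁ = a₁ + a₂`. Double counting the edges at `0`
and `1` therefore shows that every edge has an end at `0` or `1`: each degree-2 node is adjacent
to both, each degree-1 node to exactly one of them. A realization is thus determined by the set
of degree-1 nodes adjacent to `0`, which can be any `(a₁ - q₂)`-subset of the `q₁` degree-1 nodes.
-/

def udeg {N : ℕ} (A : Fin N → Fin N → Bool) (v : Fin N) : ℕ :=
  (Finset.univ.filter (fun u => A v u = true)).card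

open Finset

namespace DegreeRealization

section TwoStars

variable {n : ℕ}

def neighbors (A : Fin n → Fin n → Bool) (v : Fin n) : Finset (Fin n) :=
  univ.filter fun u => A v u = true

theorem udeg_eq_card_neighbors (A : Fin n → Fin n → Bool) (v : Fin n) :
    udeg A v = #(neighbors A v) := rfl

@[simp]
theorem mem_neighbors {A : Fin n → Fin n → Bool} {v u : Fin n} :
    u ∈ neighbors A v ↔ A v u = true := by
  simp [neighbors]

def twoStars (x y : Fin n) (X Y : Finset (Fin n)) (u v : Fin n) : Bool :=
  decide ((u = x ∧ v ∈ X) ∨ (v = x ∧ u ∈ X) ∨ (u = y ∧ v ∈ Y) ∨ (v = y ∧ u ∈ Y))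

variable {x y : Fin n} {X Y : Finset (Fin n)}

theorem twoStars_comm (u v : Fin n) : twoStars x y X Y u v = twoStars x y X Y v u := by
  simp only [twoStars, decide_eq_decide]
  tauto

theorem twoStars_self (hx : x ∉ X ∪ Y) (hy : y ∉ X ∪ Y) (v : Fin n) :
    twoStars x y X Y v v = false := by
  simp only [mem_union, not_or] at hx hy
  simp only [twoStars, decide_eq_false_iff_not]
  rintro (⟨rfl, h⟩ | ⟨rfl, h⟩ | ⟨rfl, h⟩ | ⟨rfl, h⟩) <;> tauto

theorem neighbors_twoStars_left (hxy : x ≠ y) (hx : x ∉ X ∪ Y) :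
    neighbors (twoStars x y X Y) x = X := by
  ext v
  simp only [mem_union, not_or] at hx
  simp only [mem_neighbors, twoStars, decide_eq_true_eq]
  grind

theorem neighbors_twoStars_right (hxy : x ≠ y) (hy : y ∉ X ∪ Y) :
    neighbors (twoStars x y X Y) y = Y := by
  ext v
  simp only [mem_union, not_or] at hy
  simp only [mem_neighbors, twoStars, decide_eq_true_eq]
  grind

theorem udeg_twoStars_of_ne (hxy : x ≠ y) {v : Fin n} (hvx : v ≠ x) (hvy : v ≠ y) :
    udeg (twoStars x y X Y) v = (if v ∈ X then 1 else 0) + (if v ∈ Y then 1 else 0) := by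
  have : neighbors (twoStars x y X Y) v = ({x, y} : Finset (Fin n)).filter
      (fun w => (w = x ∧ v ∈ X) ∨ (w = y ∧ v ∈ Y)) := by
    ext w
    simp only [mem_neighbors, twoStars, decide_eq_true_eq, mem_filter, mem_insert,
      mem_singleton]
    grind
  rw [udeg_eq_card_neighbors, this, filter_insert, filter_singleton]
  by_cases hX : v ∈ X <;> by_cases hY : v ∈ Y <;> simp [hX, hY, hxy, hxy.symm]

theorem eq_twoStars_neighbors {A : Fin n → Fin n → Bool} (hsymm : ∀ u v, A u v = A v u)
    (hedge : ∀ u v, A u v = true → u = x ∨ u = y ∨ v = x ∨ v = y) :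
    A = twoStars x y (neighbors A x) (neighbors A y) := by
  funext u v
  rw [Bool.eq_iff_iff]
  simp only [twoStars, mem_neighbors, decide_eq_true_eq]
  constructor
  · intro h
    rcases hedge u v h with rfl | rfl | rfl | rfl
    · exact Or.inl ⟨rfl, h⟩
    · exact Or.inr (Or.inr (Or.inl ⟨rfl, h⟩))
    · exact Or.inr (Or.inl ⟨rfl, hsymm u v ▸ h⟩)
    · exact Or.inr (Or.inr (Or.inr ⟨rfl, hsymm u v ▸ h⟩))
  · rintro (⟨rfl, h⟩ | ⟨rfl, h⟩ | ⟨rfl, h⟩ | ⟨rfl, h⟩) <;> simp_all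

theorem neighbors_subset_pair_of_sum_udeg_le {A : Fin n → Fin n → Bool}
    (hsymm : ∀ u v, A u v = A v u) (hxy : x ≠ y) {T : Finset (Fin n)}
    (hxT : neighbors A x ⊆ T) (hyT : neighbors A y ⊆ T)
    (hsum : ∑ v ∈ T, udeg A v ≤ udeg A x + udeg A y) {v : Fin n} (hv : v ∈ T) :
    neighbors A v ⊆ {x, y} := by
  have hle : ∀ v ∈ T, #(({x, y} : Finset (Fin n)).filter (A v · = true)) ≤ udeg A v :=
    fun v _ ↦ card_le_card fun w hw ↦ by simpa using (mem_filter.1 hw).2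
  have hcount : ∑ v ∈ T, #(({x, y} : Finset (Fin n)).filter (A v · = true)) =
      udeg A x + udeg A y := by
    have hbelow : ∀ w, neighbors A w ⊆ T → T.filter (A · w = true) = neighbors A w :=
      fun w hw ↦ by
        ext u
        simp only [mem_filter, mem_neighbors, hsymm u w, and_iff_right_iff_imp]
        exact fun h ↦ hw (mem_neighbors.2 h)
    have := sum_card_bipartiteAbove_eq_sum_card_bipartiteBelow (s := T) (t := {x, y})
      (r := fun v w ↦ A v w = true)
    simp only [bipartiteAbove, bipartiteBelow] at this
    rw [this, sum_pair hxy, hbelow x hxT, hbelow y hyT, udeg_eq_card_neighbors,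
      udeg_eq_card_neighbors]
  have heq :=
    (sum_eq_sum_iff_of_le hle).1 (le_antisymm (sum_le_sum hle) (hcount ▸ hsum)) v hv
  rw [udeg_eq_card_neighbors] at heq
  have := eq_of_subset_of_card_le (fun w hw ↦ by simpa using (mem_filter.1 hw).2) heq.ge
  rw [← this]
  exact filter_subset _ _

end TwoStars

section DegreeSequence

variable {N a1 a2 q1 q2 : ℕ}

theorem card_filter_le_val_lt {n : ℕ} (a b : ℕ) (hb : b ≤ n) :
    #(univ.filter fun v : Fin n ↦ a ≤ (v : ℕ) ∧ (v : ℕ) < b) = b - a := by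
  have : (univ.filter fun v : Fin n ↦ a ≤ (v : ℕ) ∧ (v : ℕ) < b) =
      (Ico a b).attachFin (fun m hm ↦ (mem_Ico.1 hm).2.trans_le hb) := by
    ext v
    simp
  rw [this, card_attachFin, Nat.card_Ico]

def twoNodes (N q2 : ℕ) : Finset (Fin (N + 2)) :=
  univ.filter fun v ↦ 2 ≤ (v : ℕ) ∧ (v : ℕ) < 2 + q2

def oneNodes (N q2 q1 : ℕ) : Finset (Fin (N + 2)) :=
  univ.filter fun v ↦ 2 + q2 ≤ (v : ℕ) ∧ (v : ℕ) < 2 + q2 + q1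

theorem card_twoNodes (h : q2 ≤ N) : #(twoNodes N q2) = q2 := by
  rw [twoNodes, card_filter_le_val_lt _ _ (by omega)]
  omega

theorem card_oneNodes (h : q2 + q1 ≤ N) : #(oneNodes N q2 q1) = q1 := by
  rw [oneNodes, card_filter_le_val_lt _ _ (by omega)]
  omega

theorem disjoint_twoNodes_oneNodes : Disjoint (twoNodes N q2) (oneNodes N q2 q1) := by
  simp only [twoNodes, oneNodes, disjoint_left, mem_filter, mem_univ, true_and]
  omega

theorem zero_notMem_and_one_notMem {X : Finset (Fin (N + 2))}
    (hX : X ⊆ twoNodes N q2 ∪ oneNodes N q2 q1) : 0 ∉ X ∧ 1 ∉ X := by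
  have two_le : ∀ v ∈ X, 2 ≤ (v : ℕ) := fun v hv ↦ by
    have := hX hv
    simp only [twoNodes, oneNodes, mem_union, mem_filter, mem_univ, true_and] at this
    omega
  exact ⟨fun h ↦ by simpa using two_le 0 h, fun h ↦ by simpa using two_le 1 h⟩

def degSeq (a1 a2 q1 q2 : ℕ) (v : Fin (N + 2)) : ℕ :=
  if (v : ℕ) = 0 then a1 else if (v : ℕ) = 1 then a2
  else if (v : ℕ) < 2 + q2 then 2
  else if (v : ℕ) < 2 + q2 + q1 then 1 else 0

theorem degSeq_of_mem_twoNodes {v : Fin (N + 2)} (hv : v ∈ twoNodes N q2) :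
    degSeq a1 a2 q1 q2 v = 2 := by
  simp only [twoNodes, mem_filter, mem_univ, true_and] at hv
  simp only [degSeq]
  split_ifs <;> omega

theorem degSeq_of_mem_oneNodes {v : Fin (N + 2)} (hv : v ∈ oneNodes N q2 q1) :
    degSeq a1 a2 q1 q2 v = 1 := by
  simp only [oneNodes, mem_filter, mem_univ, true_and] at hv
  simp only [degSeq]
  split_ifs <;> omega

theorem degSeq_eq_zero {v : Fin (N + 2)} (hv0 : v ≠ 0) (hv1 : v ≠ 1)
    (hv2 : v ∉ twoNodes N q2) (hv3 : v ∉ oneNodes N q2 q1) : degSeq a1 a2 q1 q2 v = 0 := by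
  have hv0 : (v : ℕ) ≠ 0 := fun h ↦ hv0 (Fin.ext h)
  have hv1 : (v : ℕ) ≠ 1 := fun h ↦ hv1 (Fin.ext (by simpa using h))
  simp only [twoNodes, oneNodes, mem_filter, mem_univ, true_and] at hv2 hv3
  simp only [degSeq]
  split_ifs <;> omega

def realizationOf (N q2 q1 : ℕ) (S : Finset (Fin (N + 2))) :
    Fin (N + 2) → Fin (N + 2) → Bool :=
  twoStars 0 1 (twoNodes N q2 ∪ S) (twoNodes N q2 ∪ (oneNodes N q2 q1 \ S))

theorem realizationOf_support_subset {S : Finset (Fin (N + 2))} (hS : S ⊆ oneNodes N q2 q1) :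
    (twoNodes N q2 ∪ S) ∪ (twoNodes N q2 ∪ (oneNodes N q2 q1 \ S)) ⊆
      twoNodes N q2 ∪ oneNodes N q2 q1 :=
  union_subset (union_subset_union_right hS) (union_subset_union_right sdiff_subset)

theorem neighbors_realizationOf_zero {S : Finset (Fin (N + 2))} (hS : S ⊆ oneNodes N q2 q1) :
    neighbors (realizationOf N q2 q1 S) 0 = twoNodes N q2 ∪ S :=
  neighbors_twoStars_left zero_ne_one
    (zero_notMem_and_one_notMem (realizationOf_support_subset hS)).1

theorem realizationOf_injOn (k : ℕ) :
    Set.InjOn (realizationOf N q2 q1) ↑((oneNodes N q2 q1).powersetCard k) := by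
  intro S hS S' hS' h
  have hS := (mem_powersetCard.1 hS).1
  have hS' := (mem_powersetCard.1 hS').1
  have := neighbors_realizationOf_zero hS
  rw [h, neighbors_realizationOf_zero hS'] at this
  rw [← union_sdiff_cancel_left (disjoint_twoNodes_oneNodes.mono_right hS), ← this,
    union_sdiff_cancel_left (disjoint_twoNodes_oneNodes.mono_right hS')]

theorem udeg_realizationOf (hsum : q1 + 2 * q2 = a1 + a2) (h1 : q2 ≤ a1) (hN : q2 + q1 ≤ N)
    {S : Finset (Fin (N + 2))} (hS : S ∈ (oneNodes N q2 q1).powersetCard (a1 - q2))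
    (v : Fin (N + 2)) :
    udeg (realizationOf N q2 q1 S) v = degSeq a1 a2 q1 q2 v := by
  obtain ⟨hS, hcard⟩ := mem_powersetCard.1 hS
  have hcard_le : #S ≤ q1 := card_oneNodes hN ▸ card_le_card hS
  have hone := (zero_notMem_and_one_notMem (realizationOf_support_subset hS)).2
  by_cases hv0 : v = 0
  · subst hv0
    rw [udeg_eq_card_neighbors, neighbors_realizationOf_zero hS,
      card_union_of_disjoint (disjoint_twoNodes_oneNodes.mono_right hS),
      card_twoNodes (by omega), hcard]
    simp only [degSeq, Fin.val_zero, if_true]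
    omega
  by_cases hv1 : v = 1
  · subst hv1
    rw [udeg_eq_card_neighbors, realizationOf, neighbors_twoStars_right zero_ne_one hone,
      card_union_of_disjoint (disjoint_twoNodes_oneNodes.mono_right sdiff_subset),
      card_twoNodes (by omega), card_sdiff_of_subset hS, card_oneNodes hN, hcard]
    simp only [degSeq, Fin.val_one, one_ne_zero, if_true, if_false]
    omega
  rw [realizationOf, udeg_twoStars_of_ne zero_ne_one hv0 hv1]
  by_cases hv2 : v ∈ twoNodes N q2
  · simp [degSeq_of_mem_twoNodes hv2, hv2]
  by_cases hv3 : v ∈ oneNodes N q2 q1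
  · by_cases hvS : v ∈ S <;> simp [degSeq_of_mem_oneNodes hv3, hv2, hv3, hvS]
  · have hvS : v ∉ S := fun h ↦ hv3 (hS h)
    simp [degSeq_eq_zero hv0 hv1 hv2 hv3, hv2, hv3, hvS]

theorem realizationOf_realizes (hsum : q1 + 2 * q2 = a1 + a2) (h1 : q2 ≤ a1) (hN : q2 + q1 ≤ N)
    {S : Finset (Fin (N + 2))} (hS : S ∈ (oneNodes N q2 q1).powersetCard (a1 - q2)) :
    (∀ u v, realizationOf N q2 q1 S u v = realizationOf N q2 q1 S v u) ∧
      (∀ v, realizationOf N q2 q1 S v v = false) ∧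
      (∀ v, udeg (realizationOf N q2 q1 S) v = degSeq a1 a2 q1 q2 v) ∧
      realizationOf N q2 q1 S 0 1 = false := by
  have hsub := (mem_powersetCard.1 hS).1
  obtain ⟨hzero, hone⟩ := zero_notMem_and_one_notMem (realizationOf_support_subset hsub)
  refine ⟨twoStars_comm, twoStars_self hzero hone, udeg_realizationOf hsum h1 hN hS, ?_⟩
  rw [Bool.eq_false_iff, ne_eq, ← mem_neighbors, neighbors_realizationOf_zero hsub]
  exact fun h ↦ hone (mem_union_left _ h)

variable {A : Fin (N + 2) → Fin (N + 2) → Bool}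

theorem eq_zero_or_eq_one_or_mem_of_adj (hdeg : ∀ v, udeg A v = degSeq a1 a2 q1 q2 v)
    {u v : Fin (N + 2)} (huv : A u v = true) :
    u = 0 ∨ u = 1 ∨ u ∈ twoNodes N q2 ∪ oneNodes N q2 q1 := by
  by_contra! h
  obtain ⟨h0, h1, h2⟩ := h
  rw [mem_union, not_or] at h2
  have := (hdeg u).trans (degSeq_eq_zero h0 h1 h2.1 h2.2)
  rw [udeg_eq_card_neighbors, card_eq_zero] at this
  exact notMem_empty v (this ▸ mem_neighbors.2 huv)

theorem neighbors_subset_of_realizes (hsymm : ∀ u v, A u v = A v u)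
    (hloop : ∀ v, A v v = false) (hdeg : ∀ v, udeg A v = degSeq a1 a2 q1 q2 v)
    (h01 : A 0 1 = false) {w : Fin (N + 2)} (hw : w = 0 ∨ w = 1) :
    neighbors A w ⊆ twoNodes N q2 ∪ oneNodes N q2 q1 := by
  intro u hu
  rw [mem_neighbors, hsymm] at hu
  rcases eq_zero_or_eq_one_or_mem_of_adj hdeg hu with rfl | rfl | h
  · rcases hw with rfl | rfl <;> simp_all
  · rcases hw with rfl | rfl <;> simp_all
  · exact h

theorem eq_twoStars_of_realizes (hsum : q1 + 2 * q2 = a1 + a2) (hN : q2 + q1 ≤ N)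
    (hsymm : ∀ u v, A u v = A v u) (hloop : ∀ v, A v v = false)
    (hdeg : ∀ v, udeg A v = degSeq a1 a2 q1 q2 v) (h01 : A 0 1 = false) :
    A = twoStars 0 1 (neighbors A 0) (neighbors A 1) := by
  have hT0 := neighbors_subset_of_realizes hsymm hloop hdeg h01 (Or.inl rfl)
  have hT1 := neighbors_subset_of_realizes hsymm hloop hdeg h01 (Or.inr rfl)
  have hsum' : ∑ v ∈ twoNodes N q2 ∪ oneNodes N q2 q1, udeg A v ≤ udeg A 0 + udeg A 1 := by
    rw [sum_union disjoint_twoNodes_oneNodes,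
      sum_congr rfl fun v hv ↦ (hdeg v).trans (degSeq_of_mem_twoNodes hv),
      sum_congr rfl fun v hv ↦ (hdeg v).trans (degSeq_of_mem_oneNodes hv),
      sum_const, sum_const, card_twoNodes (by omega), card_oneNodes hN, hdeg, hdeg]
    simp only [smul_eq_mul, mul_one, degSeq, Fin.coe_ofNat_eq_mod, Nat.zero_mod, ↓reduceIte,
      Nat.one_mod, one_ne_zero]
    omega
  refine eq_twoStars_neighbors hsymm fun u v huv ↦ ?_
  rcases eq_zero_or_eq_one_or_mem_of_adj hdeg huv with h | h | h
  · exact Or.inl h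
  · exact Or.inr (Or.inl h)
  · have := neighbors_subset_pair_of_sum_udeg_le hsymm zero_ne_one hT0 hT1 hsum' h
      (mem_neighbors.2 huv)
    simp only [mem_insert, mem_singleton] at this
    tauto

theorem exists_realizationOf_eq (hsum : q1 + 2 * q2 = a1 + a2) (hN : q2 + q1 ≤ N)
    (hsymm : ∀ u v, A u v = A v u) (hloop : ∀ v, A v v = false)
    (hdeg : ∀ v, udeg A v = degSeq a1 a2 q1 q2 v) (h01 : A 0 1 = false) :
    ∃ S ∈ (oneNodes N q2 q1).powersetCard (a1 - q2), realizationOf N q2 q1 S = A := by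
  set T2 := twoNodes N q2
  set T1 := oneNodes N q2 q1
  have hA := eq_twoStars_of_realizes hsum hN hsymm hloop hdeg h01
  have hT0 := neighbors_subset_of_realizes hsymm hloop hdeg h01 (Or.inl rfl)
  have hT1 := neighbors_subset_of_realizes hsymm hloop hdeg h01 (Or.inr rfl)
  obtain ⟨h0T, h1T⟩ := zero_notMem_and_one_notMem (subset_refl (T2 ∪ T1))
  have hdegA : ∀ v ∈ T2 ∪ T1, udeg A v =
      (if v ∈ neighbors A 0 then 1 else 0) + (if v ∈ neighbors A 1 then 1 else 0) :=
    fun v hv ↦ by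
      have := udeg_twoStars_of_ne (X := neighbors A 0) (Y := neighbors A 1) zero_ne_one
        (ne_of_mem_of_not_mem hv h0T) (ne_of_mem_of_not_mem hv h1T)
      rwa [← hA] at this
  have hboth : T2 ⊆ neighbors A 0 ∩ neighbors A 1 := fun v hv ↦ by
    have := (hdegA v (mem_union_left _ hv)).symm.trans
      ((hdeg v).trans (degSeq_of_mem_twoNodes hv))
    split_ifs at this with ha hb <;> first | exact mem_inter.2 ⟨ha, hb⟩ | omega
  have hxor : ∀ v ∈ T1, v ∈ neighbors A 1 ↔ v ∉ neighbors A 0 := fun v hv ↦ by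
    have := (hdegA v (mem_union_right _ hv)).symm.trans
      ((hdeg v).trans (degSeq_of_mem_oneNodes hv))
    split_ifs at this with ha hb <;> first | omega | tauto
  have hT2 : T2 ⊆ neighbors A 0 := hboth.trans inter_subset_left
  refine ⟨neighbors A 0 \ T2, mem_powersetCard.2 ⟨fun v hv ↦ ?_, ?_⟩, ?_⟩
  · rw [mem_sdiff] at hv
    exact (mem_union.1 (hT0 hv.1)).resolve_left hv.2
  · rw [card_sdiff_of_subset hT2, ← udeg_eq_card_neighbors, hdeg, card_twoNodes (by omega)]
    rfl
  · rw [realizationOf, union_sdiff_of_subset hT2]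
    conv_rhs => rw [hA]
    congr 1
    ext v
    simp only [mem_union, mem_sdiff, not_and, not_not]
    constructor
    · rintro (hv | ⟨hv, hv'⟩)
      · exact (mem_inter.1 (hboth hv)).2
      · exact (hxor v hv).2 fun h ↦ disjoint_left.1 disjoint_twoNodes_oneNodes (hv' h) hv
    · intro hv
      refine (mem_union.1 (hT1 hv)).imp_right fun hv1 ↦ ⟨hv1, fun h ↦ ?_⟩
      exact absurd h ((hxor v hv1).1 hv)

end DegreeSequence

end DegreeRealization

open DegreeRealization

theorem stmt_8_general (N a1 a2 q1 q2 : ℕ)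
    (hsum : q1 + 2 * q2 = a1 + a2)
    (h1 : q2 ≤ a1)
    (hN : q2 + q1 ≤ N) :
    Nat.card {A : Fin (N + 2) → Fin (N + 2) → Bool //
        (∀ u v, A u v = A v u) ∧ (∀ v, A v v = false) ∧
        (∀ v, udeg A v =
          (if (v : ℕ) = 0 then a1 else if (v : ℕ) = 1 then a2
           else if (v : ℕ) < 2 + q2 then 2
           else if (v : ℕ) < 2 + q2 + q1 then 1 else 0)) ∧
        A 0 1 = false} =
      Nat.choose (a1 + a2 - 2 * q2) (a1 - q2) := by
  have hrealizes : ∀ A, ((∀ u v, A u v = A v u) ∧ (∀ v, A v v = false) ∧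
      (∀ v, udeg A v = degSeq a1 a2 q1 q2 v) ∧ A 0 1 = false) ↔
      A ∈ ((oneNodes N q2 q1).powersetCard (a1 - q2)).image (realizationOf N q2 q1) := by
    intro A
    rw [mem_image]
    constructor
    · rintro ⟨hsymm, hloop, hdeg, h01⟩
      exact exists_realizationOf_eq hsum hN hsymm hloop hdeg h01
    · rintro ⟨S, hS, rfl⟩
      exact realizationOf_realizes hsum h1 hN hS
  refine (Nat.card_congr (Equiv.subtypeEquivRight hrealizes)).trans ?_
  rw [Nat.card_eq_finsetCard,
    card_image_of_injOn (realizationOf_injOn _), card_powersetCard, card_oneNodes hN]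
  congr 1
  omega

/-- Lemma (Appendix B): for the degree sequence
`(a₁, a₂, 2,…,2 (q₂ times), 1,…,1 (q₁ times), 0,…,0)` with
`q₁ + 2q₂ = a₁ + a₂` and `a₁, a₂ ≥ q₂`, the number of undirected loopless
simple graphs realizing it in which nodes `1` and `2` are not adjacent is
`C(a₁ + a₂ - 2q₂, a₁ - q₂)`. -/
theorem stmt_8 (N a1 a2 q1 q2 : ℕ)
    (hsum : q1 + 2 * q2 = a1 + a2)
    (h1 : q2 ≤ a1) (h2 : q2 ≤ a2)
    (hN : q2 + q1 ≤ N) :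
    Nat.card {A : Fin (N + 2) → Fin (N + 2) → Bool //
        (∀ u v, A u v = A v u) ∧ (∀ v, A v v = false) ∧
        (∀ v, udeg A v =
          (if (v : ℕ) = 0 then a1 else if (v : ℕ) = 1 then a2
           else if (v : ℕ) < 2 + q2 then 2
           else if (v : ℕ) < 2 + q2 + q1 then 1 else 0)) ∧
        A 0 1 = false} =
      Nat.choose (a1 + a2 - 2 * q2) (a1 - q2) :=
  stmt_8_general N a1 a2 q1 q2 hsum h1 hN
end

section
/- Consider a bidegree sequence with in-degrees a = (a_1, a_2, 0, ..., 0), out-degrees b = (δ, δ, 2, ..., 2, 1, ..., 1, 0, ..., 0) where δ ∈ {0,1}, 2 appears q times, Σ_i a_i = Σ_i b_i = S, and a_1, a_2 ≥ q + δ. Then the number of directed graphs without loops realizing this bidegree sequence equals C(a_1 + a_2 - 2δ - 2q, a_1 - δ - q). -/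
/-! Every edge ends in node `0` or node `1`, so a realization is determined by the in-neighbourhoods
`X` of `0` and `Y` of `1`, and a node `u` lies in exactly `b u` of them. This forces `X` and `Y`
except on the `r` nodes of out-degree `1`, each of which picks one of the two sinks; the
in-degree of node `0` says that exactly `a₁ - δ - q` of them pick `0`. -/

open Finset

section InNbhdGraph

variable {n : ℕ}

def inNbhd {m : ℕ} (A : Fin m → Fin m → Bool) (v : Fin m) : Finset (Fin m) :=
  univ.filter fun u => A u v = true

theorem card_inNbhd {m : ℕ} (A : Fin m → Fin m → Bool) (v : Fin m) :
    #(inNbhd A v) = inDeg A v := rfl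

def inNbhdGraph (X Y : Finset (Fin (n + 2))) : Fin (n + 2) → Fin (n + 2) → Bool :=
  fun u v => if v = 0 then decide (u ∈ X) else if v = 1 then decide (u ∈ Y) else false

variable (X Y : Finset (Fin (n + 2)))

@[simp]
theorem inNbhd_inNbhdGraph_zero : inNbhd (inNbhdGraph X Y) 0 = X := by
  ext u; simp [inNbhd, inNbhdGraph]

@[simp]
theorem inNbhd_inNbhdGraph_one : inNbhd (inNbhdGraph X Y) 1 = Y := by
  ext u; simp [inNbhd, inNbhdGraph]

theorem inDeg_inNbhdGraph_of_ne {v : Fin (n + 2)} (h0 : v ≠ 0) (h1 : v ≠ 1) :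
    inDeg (inNbhdGraph X Y) v = 0 := by
  simp [inDeg, inNbhdGraph, h0, h1]

theorem outDeg_inNbhdGraph (u : Fin (n + 2)) :
    outDeg (inNbhdGraph X Y) u = (if u ∈ X then 1 else 0) + (if u ∈ Y then 1 else 0) := by
  rw [outDeg, card_filter, Fintype.sum_eq_add (0 : Fin (n + 2)) 1 (by simp) fun v ⟨h0, h1⟩ => by
    simp [inNbhdGraph, h0, h1]]
  simp [inNbhdGraph]

theorem inNbhdGraph_self_eq_false {v : Fin (n + 2)} (h0 : 0 ∉ X) (h1 : 1 ∉ Y) :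
    inNbhdGraph X Y v v = false := by
  unfold inNbhdGraph; split_ifs <;> subst_vars <;> simp [*]

theorem eq_inNbhdGraph {A : Fin (n + 2) → Fin (n + 2) → Bool}
    (hA : ∀ v, v ≠ 0 → v ≠ 1 → inDeg A v = 0) :
    A = inNbhdGraph (inNbhd A 0) (inNbhd A 1) := by
  funext u v
  by_cases h0 : v = 0
  · subst h0; simp [inNbhdGraph, inNbhd]
  by_cases h1 : v = 1
  · subst h1; simp [inNbhdGraph, inNbhd]
  have := hA v h0 h1
  simp_all [inNbhdGraph, inDeg, filter_eq_empty_iff]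

end InNbhdGraph

section ValIco

variable {m : ℕ}

def valIco (a b : ℕ) : Finset (Fin m) :=
  univ.filter fun u => a ≤ (u : ℕ) ∧ (u : ℕ) < b

@[simp]
theorem mem_valIco {a b : ℕ} {u : Fin m} :
    u ∈ valIco a b ↔ a ≤ (u : ℕ) ∧ (u : ℕ) < b := by
  simp [valIco]

theorem card_valIco {a b : ℕ} (hb : b ≤ m) : #(valIco a b : Finset (Fin m)) = b - a := by
  have hlt : ∀ x ∈ Ico a b, x < m := fun x hx => (mem_Ico.1 hx).2.trans_le hb
  rw [show (valIco a b : Finset (Fin m)) = (Ico a b).attachFin hlt by ext; simp,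
    card_attachFin, Nat.card_Ico]

theorem disjoint_valIco {a b c d : ℕ} (h : b ≤ c) :
    Disjoint (valIco a b : Finset (Fin m)) (valIco c d) :=
  disjoint_left.2 fun u hu hu' => by rw [mem_valIco] at hu hu'; omega

end ValIco

-- The bidegree sequence of the theorem with nodes numbered from `0`;
-- `r` is the number of nodes of out-degree `1`.
def inProfile (a1 a2 : ℕ) (v : ℕ) : ℕ :=
  if v = 0 then a1 else if v = 1 then a2 else 0

def outProfile (δ q r : ℕ) (v : ℕ) : ℕ :=
  if v < 2 then δ else if v < 2 + q then 2 else if v < 2 + q + r then 1 else 0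

def IsRealization {m : ℕ} (A : Fin m → Fin m → Bool) (a b : Fin m → ℕ) : Prop :=
  (∀ v, A v v = false) ∧ (∀ v, inDeg A v = a v) ∧ (∀ v, outDeg A v = b v)

section Realizations

variable {n : ℕ} (δ q r : ℕ)

/-- `valIco 1 (1 + δ)` is `{1}` if `δ = 1` and empty if `δ = 0`. -/
def fixedSources0 : Finset (Fin (n + 2)) := valIco 1 (1 + δ) ∪ valIco 2 (2 + q)

def fixedSources1 : Finset (Fin (n + 2)) := valIco 0 δ ∪ valIco 2 (2 + q)

def freeSources : Finset (Fin (n + 2)) := valIco (2 + q) (2 + q + r)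

def realizationOf (T : Finset (Fin (n + 2))) : Fin (n + 2) → Fin (n + 2) → Bool :=
  inNbhdGraph (fixedSources0 δ q ∪ T) (fixedSources1 δ q ∪ (freeSources q r \ T))

variable {δ q r} {T : Finset (Fin (n + 2))}

theorem card_freeSources (hn : 2 + q + r ≤ n + 2) :
    #(freeSources q r : Finset (Fin (n + 2))) = r := by
  rw [freeSources, card_valIco hn]; omega

theorem disjoint_fixedSources0_freeSources (hδ : δ ≤ 1) :
    Disjoint (fixedSources0 δ q : Finset (Fin (n + 2))) (freeSources q r) :=
  disjoint_left.2 fun u hu hu' => by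
    simp only [fixedSources0, freeSources, mem_union, mem_valIco] at hu hu'; omega

theorem disjoint_fixedSources1_freeSources (hδ : δ ≤ 1) :
    Disjoint (fixedSources1 δ q : Finset (Fin (n + 2))) (freeSources q r) :=
  disjoint_left.2 fun u hu hu' => by
    simp only [fixedSources1, freeSources, mem_union, mem_valIco] at hu hu'; omega

theorem card_fixedSources0 (hδ : δ ≤ 1) (hn : 2 + q ≤ n + 2) :
    #(fixedSources0 δ q : Finset (Fin (n + 2))) = δ + q := by
  rw [fixedSources0, card_union_of_disjoint (disjoint_valIco (by omega)), card_valIco (by omega),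
    card_valIco hn]
  omega

theorem card_fixedSources1 (hδ : δ ≤ 1) (hn : 2 + q ≤ n + 2) :
    #(fixedSources1 δ q : Finset (Fin (n + 2))) = δ + q := by
  rw [fixedSources1, card_union_of_disjoint (disjoint_valIco (by omega)), card_valIco (by omega),
    card_valIco hn]
  omega

theorem outDeg_realizationOf (hδ : δ ≤ 1) (hT : T ⊆ freeSources q r) (u : Fin (n + 2)) :
    outDeg (realizationOf δ q r T) u = outProfile δ q r u := by
  have hT' : u ∈ T → 2 + q ≤ (u : ℕ) ∧ (u : ℕ) < 2 + q + r := fun h =>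
    mem_valIco.1 (hT h)
  rw [realizationOf, outDeg_inNbhdGraph]
  by_cases hu : u ∈ T <;>
    simp only [fixedSources0, fixedSources1, freeSources, mem_union, mem_sdiff, mem_valIco, hu,
      not_true_eq_false, not_false_eq_true, and_true, and_false, or_true, or_false, true_implies,
      outProfile] at hT' ⊢ <;>
    split_ifs <;> omega

theorem inDeg_realizationOf_zero (hδ : δ ≤ 1) (hn : 2 + q ≤ n + 2)
    (hT : T ⊆ freeSources q r) :
    inDeg (realizationOf δ q r T) 0 = δ + q + #T := by
  rw [← card_inNbhd, realizationOf, inNbhd_inNbhdGraph_zero,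
    card_union_of_disjoint (disjoint_of_subset_right hT (disjoint_fixedSources0_freeSources hδ)),
    card_fixedSources0 hδ hn]

theorem inDeg_realizationOf_one (hδ : δ ≤ 1) (hn : 2 + q + r ≤ n + 2)
    (hT : T ⊆ freeSources q r) :
    inDeg (realizationOf δ q r T) 1 = δ + q + (r - #T) := by
  rw [← card_inNbhd, realizationOf, inNbhd_inNbhdGraph_one,
    card_union_of_disjoint (disjoint_of_subset_right sdiff_subset
      (disjoint_fixedSources1_freeSources hδ)),
    card_fixedSources1 hδ (by omega), card_sdiff_of_subset hT, card_freeSources hn]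

theorem isRealization_realizationOf (hδ : δ ≤ 1) (hn : 2 + q + r ≤ n + 2)
    (hT : T ⊆ freeSources q r) {a1 a2 : ℕ} (ha1 : a1 = δ + q + #T)
    (ha2 : a2 = δ + q + (r - #T)) :
    IsRealization (realizationOf δ q r T) (inProfile a1 a2 ·) (outProfile δ q r ·) := by
  refine ⟨fun v => inNbhdGraph_self_eq_false _ _ ?_ ?_, fun v => ?_,
    outDeg_realizationOf hδ hT⟩
  · rw [mem_union, not_or]
    exact ⟨by simp [fixedSources0], fun h => by simpa [freeSources] using hT h⟩
  · simp only [fixedSources1, freeSources, mem_union, mem_sdiff, mem_valIco, Fin.val_one]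
    omega
  by_cases h0 : v = 0
  · subst h0
    simp [inDeg_realizationOf_zero hδ (by omega) hT, inProfile, ha1]
  by_cases h1 : v = 1
  · subst h1
    simp [inDeg_realizationOf_one hδ hn hT, inProfile, ha2]
  rw [realizationOf, inDeg_inNbhdGraph_of_ne _ _ h0 h1]
  simp only [Fin.ext_iff, Fin.val_zero, Fin.val_one] at h0 h1
  simp [inProfile, h0, h1]

theorem inNbhdGraph_eq_realizationOf (hδ : δ ≤ 1) {X Y : Finset (Fin (n + 2))} (hX : 0 ∉ X)
    (hY : 1 ∉ Y)
    (h : ∀ u, (if u ∈ X then 1 else 0) + (if u ∈ Y then 1 else 0) = outProfile δ q r u) :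
    inNbhdGraph X Y = realizationOf δ q r (X ∩ freeSources q r) := by
  have hmem : ∀ u, (u ∈ X ↔ u ∈ fixedSources0 δ q ∪ (X ∩ freeSources q r)) ∧
      (u ∈ Y ↔ u ∈ fixedSources1 δ q ∪ (freeSources q r \ (X ∩ freeSources q r))) := by
    intro u
    have hu := h u
    have hu0 : (u : ℕ) = 0 → u ∉ X := fun h0 => (Fin.ext h0 : u = 0) ▸ hX
    have hu1 : (u : ℕ) = 1 → u ∉ Y := fun h1 => (Fin.ext h1 : u = 1) ▸ hY
    by_cases hx : u ∈ X <;> by_cases hy : u ∈ Y <;>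
      simp only [hx, hy, ↓reduceIte, outProfile, fixedSources0, fixedSources1, freeSources,
        mem_union, mem_inter, mem_sdiff, mem_valIco, not_true_eq_false, not_false_eq_true,
        imp_false, true_iff, false_iff, true_and, false_and, and_true, or_false]
        at hu hu0 hu1 ⊢ <;>
      split_ifs at hu <;> omega
  unfold realizationOf
  congr 1 <;> ext u
  exacts [(hmem u).1, (hmem u).2]

theorem eq_realizationOf_of_isRealization (hδ : δ ≤ 1) {a1 a2 : ℕ}
    {A : Fin (n + 2) → Fin (n + 2) → Bool}
    (hA : IsRealization A (inProfile a1 a2 ·) (outProfile δ q r ·)) :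
    A = realizationOf δ q r (inNbhd A 0 ∩ freeSources q r) := by
  obtain ⟨hloop, hin, hout⟩ := hA
  have hA : A = inNbhdGraph (inNbhd A 0) (inNbhd A 1) := eq_inNbhdGraph fun v h0 h1 => by
    simp only [ne_eq, Fin.ext_iff, Fin.val_zero, Fin.val_one] at h0 h1
    simp [hin, inProfile, h0, h1]
  calc A = inNbhdGraph (inNbhd A 0) (inNbhd A 1) := hA
    _ = _ := inNbhdGraph_eq_realizationOf hδ (by simp [inNbhd, hloop]) (by simp [inNbhd, hloop])
      fun u => by rw [← outDeg_inNbhdGraph, ← hA, hout]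

def realizationEquiv (hδ : δ ≤ 1) (hn : 2 + q + r ≤ n + 2) {a1 a2 k : ℕ}
    (ha1 : a1 = δ + q + k) (ha2 : a2 = δ + q + (r - k)) :
    {A : Fin (n + 2) → Fin (n + 2) → Bool //
        IsRealization A (inProfile a1 a2 ·) (outProfile δ q r ·)} ≃
      powersetCard k (freeSources (n := n) q r) where
  toFun A := ⟨inNbhd A.1 0 ∩ freeSources q r, mem_powersetCard.2 ⟨inter_subset_right, by
    have := A.2.2.1 0
    rw [eq_realizationOf_of_isRealization hδ A.2,
      inDeg_realizationOf_zero hδ (by omega) inter_subset_right] at this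
    simp only [inProfile, Fin.val_zero, ↓reduceIte] at this
    omega⟩⟩
  invFun T := ⟨realizationOf δ q r T,
    isRealization_realizationOf hδ hn (mem_powersetCard.1 T.2).1
      (by rw [(mem_powersetCard.1 T.2).2, ha1]) (by rw [(mem_powersetCard.1 T.2).2, ha2])⟩
  left_inv A := Subtype.ext (eq_realizationOf_of_isRealization hδ A.2).symm
  right_inv T := Subtype.ext <| by
    simp only [realizationOf, inNbhd_inNbhdGraph_zero, union_inter_distrib_right,
      disjoint_iff_inter_eq_empty.1 (disjoint_fixedSources0_freeSources hδ), empty_union,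
      inter_eq_left.2 (mem_powersetCard.1 T.2).1]

end Realizations

theorem stmt_9_general (N a1 a2 q δ : ℕ) (hδ : δ ≤ 1)
    (h1 : q + δ ≤ a1) (h2 : q + δ ≤ a2)
    (hN : q + (a1 + a2 - 2 * δ - 2 * q) ≤ N) :
    Nat.card {A : Fin (N + 2) → Fin (N + 2) → Bool //
        (∀ v, A v v = false) ∧
        (∀ v, inDeg A v =
          (if (v : ℕ) = 0 then a1 else if (v : ℕ) = 1 then a2 else 0)) ∧
        (∀ v, outDeg A v =
          (if (v : ℕ) < 2 then δ
           else if (v : ℕ) < 2 + q then 2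
           else if (v : ℕ) < 2 + q + (a1 + a2 - 2 * δ - 2 * q) then 1
           else 0))} =
      Nat.choose (a1 + a2 - 2 * δ - 2 * q) (a1 - δ - q) := by
  have hn : 2 + q + (a1 + a2 - 2 * δ - 2 * q) ≤ N + 2 := by omega
  have e := realizationEquiv (k := a1 - δ - q) hδ hn (a1 := a1) (a2 := a2) (by omega) (by omega)
  refine (Nat.card_congr e).trans ?_
  rw [Nat.card_eq_fintype_card, Fintype.card_coe, card_powersetCard, card_freeSources hn]

/-- Lemma (Appendix B, directed graphs without loops): with in-degrees
`(a₁, a₂, 0,…,0)` and out-degrees `(δ, δ, 2,…,2 (q times), 1,…,1, 0,…,0)`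
where `δ ∈ {0,1}`, `∑ b = S = a₁ + a₂` and `a₁, a₂ ≥ q + δ`, the number of
loopless directed graphs realizing this bidegree sequence is
`C(a₁ + a₂ - 2δ - 2q, a₁ - δ - q)`. -/
theorem stmt_9 (N a1 a2 q δ : ℕ) (hδ : δ ≤ 1)
    (h1 : q + δ ≤ a1) (h2 : q + δ ≤ a2)
    (hq : 2 * δ + 2 * q ≤ a1 + a2)
    (hN : q + (a1 + a2 - 2 * δ - 2 * q) ≤ N) :
    Nat.card {A : Fin (N + 2) → Fin (N + 2) → Bool //
        (∀ v, A v v = false) ∧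
        (∀ v, inDeg A v =
          (if (v : ℕ) = 0 then a1 else if (v : ℕ) = 1 then a2 else 0)) ∧
        (∀ v, outDeg A v =
          (if (v : ℕ) < 2 then δ
           else if (v : ℕ) < 2 + q then 2
           else if (v : ℕ) < 2 + q + (a1 + a2 - 2 * δ - 2 * q) then 1
           else 0))} =
      Nat.choose (a1 + a2 - 2 * δ - 2 * q) (a1 - δ - q) :=
  stmt_9_general N a1 a2 q δ hδ h1 h2 hN
end

section
/- Let f : {1,...,N} → [0,∞) with Σ_{i=1}^N f(i) = S, max_i f(i) ≤ C·S^{1/2-τ}, and let r ≤ C·S^{1/2-τ} with r ≥ 2, for constants C > 0 and τ ∈ (0, 1/2]. Then Σ over sequences (x_1,...,x_r) of pairwise distinct indices of ∏_{i=1}^r f(x_i) equals (Σ over sequences with x_1 unconstrained and x_2,...,x_r pairwise distinct of ∏_{i=1}^r f(x_i)) − (r−1)·(Σ over sequences with x_1 = x_2 and x_2,...,x_r pairwise distinct of ∏ f(x_i)), and the second term is at most C'·S^{-2τ} times the first for a constant C' depending only on C. -/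
/-!
Split off the first coordinate. Summing `f x₁` against an injective tail `(x₂, …, x_r)` counts
every injective `r`-tuple once, plus the tuples with `x₁ = x_j` for some `j ≥ 2`; permuting the
tail shows that each of these `r - 1` families has the weight of the family `x₁ = x₂`. That
weight is at most `max f` times the tail sum `T`, so with `r - 1, max f ≤ M := C S^{1/2-τ}` the
correction is at most `M² T = C² S^{-2τ} (S T)`, and `S T` is the unconstrained-`x₁` sum.
-/

/-- `DistinctFrom k x` means the coordinates `x_i` with index `i ≥ k` are
pairwise distinct (coordinates with index `< k` are unconstrained). -/
abbrev DistinctFrom (k : ℕ) {r N : ℕ} (x : Fin r → Fin N) : Prop :=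
  ∀ i j : Fin r, k ≤ (i : ℕ) → k ≤ (j : ℕ) → x i = x j → i = j

abbrev EqOnFirst (k : ℕ) {r N : ℕ} (x : Fin r → Fin N) : Prop :=
  ∀ i j : Fin r, (i : ℕ) < k → (j : ℕ) < k → x i = x j

open Function Finset

theorem Fintype.sum_pi_fin_succ {α M : Type*} [Fintype α] [AddCommMonoid M] {n : ℕ}
    (g : (Fin (n + 1) → α) → M) :
    ∑ x, g x = ∑ v, ∑ y : Fin n → α, g (Fin.cons v y) := by
  rw [← (Fin.consEquiv fun _ ↦ α).sum_comp, Fintype.sum_prod_type]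
  rfl

section InjectiveProducts

variable {α R : Type*} [Fintype α] [DecidableEq α]

def injProdSum [CommSemiring R] (f : α → R) (n : ℕ) : R :=
  ∑ y : Fin n → α, if Injective y then ∏ i, f (y i) else 0

def injProdSumDup [CommSemiring R] (f : α → R) {n : ℕ} (j : Fin n) : R :=
  ∑ y : Fin n → α, if Injective y then f (y j) * ∏ i, f (y i) else 0

theorem injProdSumDup_eq [CommSemiring R] (f : α → R) {n : ℕ} (j k : Fin n) :
    injProdSumDup f j = injProdSumDup f k := by
  let σ := Equiv.swap j k
  refine Fintype.sum_equiv (σ.arrowCongr (Equiv.refl α)) _ _ fun y ↦ ?_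
  change _ = if Injective (y ∘ σ) then f (y (σ k)) * ∏ i, f (y (σ i)) else 0
  simp only [σ, Equiv.swap_apply_right, Equiv.injective_comp, Equiv.prod_comp σ fun i ↦ f (y i)]

theorem sum_mul_injProdSum [CommSemiring R] (f : α → R) (n : ℕ) :
    (∑ v, f v) * injProdSum f n = injProdSum f (n + 1) + ∑ j : Fin n, injProdSumDup f j := by
  have hDup : ∑ j : Fin n, injProdSumDup f j =
      ∑ v, ∑ y : Fin n → α, if v ∈ Set.range y ∧ Injective y then f v * ∏ i, f (y i) else 0 := by
    simp only [injProdSumDup]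
    rw [sum_comm, sum_comm (γ := α)]
    refine sum_congr rfl fun y _ ↦ ?_
    by_cases hy : Injective y
    · simp only [hy, and_true, if_true, ← sum_filter]
      rw [show univ.filter (· ∈ Set.range y) = univ.image y by ext; simp [eq_comm],
        sum_image fun a _ b _ hab ↦ hy hab]
    · simp [hy]
  rw [hDup, injProdSum, injProdSum, Fintype.sum_pi_fin_succ, sum_mul_sum, ← sum_add_distrib]
  simp only [Fin.cons_injective_iff, Fin.prod_univ_succ, Fin.cons_zero, Fin.cons_succ, mul_ite,
    mul_zero, ← sum_add_distrib]
  refine sum_congr rfl fun v _ ↦ sum_congr rfl fun y _ ↦ ?_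
  by_cases hv : v ∈ Set.range y <;> simp [hv]

theorem sum_mul_injProdSum_succ [CommSemiring R] (f : α → R) (n : ℕ) :
    (∑ v, f v) * injProdSum f (n + 1) =
      injProdSum f (n + 2) + (n + 1) * injProdSumDup f (0 : Fin (n + 1)) := by
  rw [sum_mul_injProdSum, Fintype.sum_congr _ _ fun j ↦ injProdSumDup_eq f j 0]
  simp [sum_const, nsmul_eq_mul]

theorem injProdSumDup_nonneg [CommSemiring R] [PartialOrder R] [IsOrderedRing R] {f : α → R}
    (hf : ∀ v, 0 ≤ f v) {n : ℕ} (j : Fin n) : 0 ≤ injProdSumDup f j :=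
  sum_nonneg fun _ _ ↦ by
    split_ifs
    exacts [mul_nonneg (hf _) (prod_nonneg fun _ _ ↦ hf _), le_rfl]

theorem injProdSumDup_le [CommSemiring R] [PartialOrder R] [IsOrderedRing R] {f : α → R} {M : R}
    (hf : ∀ v, 0 ≤ f v) (hfM : ∀ v, f v ≤ M) {n : ℕ} (j : Fin n) :
    injProdSumDup f j ≤ M * injProdSum f n := by
  rw [injProdSum, mul_sum]
  refine sum_le_sum fun y _ ↦ ?_
  split_ifs
  · exact mul_le_mul_of_nonneg_right (hfM _) (prod_nonneg fun i _ ↦ hf _)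
  · rw [mul_zero]

end InjectiveProducts

section Constraints

variable {N : ℕ}

theorem distinctFrom_zero_iff {r : ℕ} (x : Fin r → Fin N) : DistinctFrom 0 x ↔ Injective x :=
  ⟨fun h _ _ hab ↦ h _ _ (Nat.zero_le _) (Nat.zero_le _) hab, fun h _ _ _ _ hab ↦ h hab⟩

theorem distinctFrom_one_cons_iff {n : ℕ} (v : Fin N) (y : Fin n → Fin N) :
    DistinctFrom 1 (Fin.cons v y : Fin (n + 1) → Fin N) ↔ Injective y := by
  constructor
  · intro h a b hab
    exact Fin.succ_injective _ (h a.succ b.succ (by simp) (by simp) (by simpa using hab))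
  · intro h i j hi hj hij
    cases i using Fin.cases with
    | zero => simp at hi
    | succ a =>
      cases j using Fin.cases with
      | zero => simp at hj
      | succ b => exact congrArg Fin.succ (h (by simpa using hij))

theorem eqOnFirst_two_cons_iff {n : ℕ} (v : Fin N) (y : Fin (n + 1) → Fin N) :
    EqOnFirst 2 (Fin.cons v y : Fin (n + 2) → Fin N) ↔ v = y 0 := by
  constructor
  · intro h
    simpa using h 0 1 (by simp) (by simp)
  · rintro rfl
    have hconst : ∀ i : Fin (n + 2), (i : ℕ) < 2 →
        (Fin.cons (y 0) y : Fin (n + 2) → Fin N) i = y 0 := by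
      intro i hi
      cases i using Fin.cases with
      | zero => rfl
      | succ a => rw [Fin.cons_succ, show a = 0 by ext; simp at hi; omega]
    intro i j hi hj
    rw [hconst i hi, hconst j hj]

variable [CommSemiring R] (f : Fin N → R)

theorem sum_distinctFrom_zero (r : ℕ) :
    ∑ x : Fin r → Fin N, (if DistinctFrom 0 x then ∏ i, f (x i) else 0) = injProdSum f r := by
  simp only [distinctFrom_zero_iff, injProdSum]

theorem sum_distinctFrom_one (n : ℕ) :
    ∑ x : Fin (n + 1) → Fin N, (if DistinctFrom 1 x then ∏ i, f (x i) else 0) =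
      (∑ v, f v) * injProdSum f n := by
  rw [Fintype.sum_pi_fin_succ, injProdSum, sum_mul_sum]
  simp only [distinctFrom_one_cons_iff, Fin.prod_univ_succ, Fin.cons_zero, Fin.cons_succ, mul_ite,
    mul_zero]

theorem sum_eqOnFirst_two_distinctFrom_one (n : ℕ) :
    ∑ x : Fin (n + 2) → Fin N, (if EqOnFirst 2 x ∧ DistinctFrom 1 x then ∏ i, f (x i) else 0) =
      injProdSumDup f (0 : Fin (n + 1)) := by
  rw [Fintype.sum_pi_fin_succ, sum_comm, injProdSumDup]
  simp only [eqOnFirst_two_cons_iff, distinctFrom_one_cons_iff, Fin.prod_univ_succ, Fin.cons_zero,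
    Fin.cons_succ, ite_and, sum_ite_eq', mem_univ, if_true]

end Constraints

theorem stmt_11_general (C τ : ℝ) (hC : 0 < C) :
    ∃ C' > 0, ∀ (N r : ℕ) (f : Fin N → ℝ) (S : ℝ),
      (∀ i, 0 ≤ f i) → (∑ i, f i) = S → 0 < S →
      (∀ i, f i ≤ C * S ^ ((1 : ℝ) / 2 - τ)) →
      2 ≤ r → (r : ℝ) ≤ C * S ^ ((1 : ℝ) / 2 - τ) →
      ((∑ x : Fin r → Fin N,
          if DistinctFrom 0 x then ∏ i, f (x i) else 0)
        = (∑ x : Fin r → Fin N,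
            if DistinctFrom 1 x then ∏ i, f (x i) else 0)
          - ((r : ℝ) - 1) *
            (∑ x : Fin r → Fin N,
              if EqOnFirst 2 x ∧ DistinctFrom 1 x then ∏ i, f (x i) else 0))
      ∧ ((r : ℝ) - 1) *
            (∑ x : Fin r → Fin N,
              if EqOnFirst 2 x ∧ DistinctFrom 1 x then ∏ i, f (x i) else 0)
          ≤ C' * S ^ (-(2 * τ)) *
            (∑ x : Fin r → Fin N,
              if DistinctFrom 1 x then ∏ i, f (x i) else 0) := by
  refine ⟨C ^ 2, by positivity, fun N r f S hf hsum hS hfM hr hrM ↦ ?_⟩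
  obtain ⟨m, rfl⟩ : ∃ m, r = m + 2 := ⟨r - 2, by omega⟩
  set M := C * S ^ ((1 : ℝ) / 2 - τ)
  have hm : ((m + 2 : ℕ) : ℝ) - 1 = m + 1 := by push_cast; ring
  have hmM : (m + 1 : ℝ) ≤ M := by push_cast at hrM; linarith
  have hMM : M * M = C ^ 2 * S ^ (-(2 * τ)) * S := by
    rw [mul_mul_mul_comm, ← Real.rpow_add hS, mul_assoc (C ^ 2), ← Real.rpow_add_one hS.ne', sq]
    ring_nf
  rw [sum_distinctFrom_zero, sum_distinctFrom_one f (m + 1),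
    sum_eqOnFirst_two_distinctFrom_one, hm, hsum]
  have hsplit := sum_mul_injProdSum_succ f m
  rw [hsum] at hsplit
  refine ⟨by linear_combination -hsplit, ?_⟩
  calc (m + 1 : ℝ) * injProdSumDup f 0 ≤ M * (M * injProdSum f (m + 1)) :=
        mul_le_mul hmM (injProdSumDup_le hf hfM 0) (injProdSumDup_nonneg hf 0) (by linarith)
    _ = C ^ 2 * S ^ (-(2 * τ)) * (S * injProdSum f (m + 1)) := by rw [← mul_assoc, hMM]; ring

/-- The splitting identity and bound behind Lemma 2: for nonnegative `f` with
`∑ f = S`, `max f ≤ C·S^{1/2-τ}` and `2 ≤ r ≤ C·S^{1/2-τ}`,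
`∑_{x₁≠⋯≠x_r} ∏ f(x_i) = ∑_{x₁,x₂≠⋯≠x_r} ∏ f(x_i)
  - (r-1) ∑_{x₁=x₂≠⋯≠x_r} ∏ f(x_i)`,
and the subtracted term is at most `C'·S^{-2τ}` times the first term on the
right, for a constant `C'` depending only on `C`. -/
theorem stmt_11 (C τ : ℝ) (hC : 0 < C) (hτ : 0 < τ) (hτ' : τ ≤ 1 / 2) :
    ∃ C' > 0, ∀ (N r : ℕ) (f : Fin N → ℝ) (S : ℝ),
      (∀ i, 0 ≤ f i) → (∑ i, f i) = S → 0 < S →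
      (∀ i, f i ≤ C * S ^ ((1 : ℝ) / 2 - τ)) →
      2 ≤ r → (r : ℝ) ≤ C * S ^ ((1 : ℝ) / 2 - τ) →
      ((∑ x : Fin r → Fin N,
          if DistinctFrom 0 x then ∏ i, f (x i) else 0)
        = (∑ x : Fin r → Fin N,
            if DistinctFrom 1 x then ∏ i, f (x i) else 0)
          - ((r : ℝ) - 1) *
            (∑ x : Fin r → Fin N,
              if EqOnFirst 2 x ∧ DistinctFrom 1 x then ∏ i, f (x i) else 0))
      ∧ ((r : ℝ) - 1) *
            (∑ x : Fin r → Fin N,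
              if EqOnFirst 2 x ∧ DistinctFrom 1 x then ∏ i, f (x i) else 0)
          ≤ C' * S ^ (-(2 * τ)) *
            (∑ x : Fin r → Fin N,
              if DistinctFrom 1 x then ∏ i, f (x i) else 0) :=
  stmt_11_general C τ hC
end

section
/- Let f : {1,...,N} → [0,∞), Σ_i f(i) = S, max_i f(i) = O(S^{1/2-τ}), r = O(S^{1/2-τ}) with r ≥ k for a fixed natural number k, and τ > 0. Define ξ = Σ over tuples with x_1,...,x_k unconstrained and x_{k+1},...,x_r pairwise distinct (and distinct from each other but not necessarily from x_1,...,x_k) of ∏_{i=1}^r f(x_i). Then Σ over tuples with x_1,...,x_r all pairwise distinct of ∏_{i=1}^r f(x_i) = ξ·(1 + O(S^{-2τ})), i.e., the relative error between the fully-distinct sum and ξ is bounded by a constant times S^{-2τ} (the constant depending on k and the implied constants). -/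
/-!
Let `A m` be the sum over tuples whose coordinates of index `≥ m` are pairwise distinct, so that
`A 0` is the fully distinct sum, `A k = ξ`, and `A` is monotone. Passing from `A (m + 1)` to `A m`
also forbids `x m` to coincide with one of the at most `r` later coordinates, and resampling `x m`
shows that each such coincidence has weight at most `(max f / S) · A (m + 1)`. Hence
`S (A (m + 1) - A m) ≤ r · max f · A (m + 1) ≤ C² S^(1 - 2τ) A (m + 1)`, and telescoping
over `m < k` gives `A k - A 0 ≤ k C² S^(-2τ) A k`.
-/

open Finset Function

section InjOnSum

variable {ι α : Type*} [DecidableEq ι]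

theorem Fintype.sum_sum_update_swap [Fintype ι] [Fintype α] {M : Type*} [AddCommMonoid M] (p : ι)
    (F : (ι → α) → α → M) :
    ∑ x, ∑ w, F x w = ∑ x, ∑ w, F (update x p w) (x p) := by
  let σ : (ι → α) × α → (ι → α) × α := fun xw => (update xw.1 p xw.2, xw.1 p)
  have hσ : Involutive σ := fun xw => by simp [σ]
  simp only [← Fintype.sum_prod_type']
  exact (Equiv.sum_comp (hσ.toPerm σ) fun xw => F xw.1 xw.2).symm

theorem Fintype.prod_comp_update_mul [Fintype ι] {R : Type*} [CommMonoid R] (f : α → R)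
    (x : ι → α) (p : ι) (w : α) :
    (∏ i, f (update x p w i)) * f (x p) = f w * ∏ i, f (x i) := by
  rw [Fintype.prod_eq_mul_prod_compl p, Fintype.prod_eq_mul_prod_compl p (fun i => f (x i)),
    update_self, Finset.prod_congr rfl fun i hi => by
      rw [update_of_ne (by simpa using hi)]]
  ac_rfl

variable [Fintype ι] [Fintype α] [DecidableEq α]

noncomputable def injOnSum (f : α → ℝ) (s : Finset ι) : ℝ :=
  ∑ x : ι → α, if Set.InjOn x s then ∏ i, f (x i) else 0

variable {f : α → ℝ}

theorem injOnSum_nonneg (hf : ∀ a, 0 ≤ f a) (s : Finset ι) : 0 ≤ injOnSum f s :=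
  sum_nonneg fun _ _ => by split_ifs <;> first | exact prod_nonneg fun _ _ => hf _ | exact le_rfl

theorem injOnSum_anti (hf : ∀ a, 0 ≤ f a) {s t : Finset ι} (hst : s ⊆ t) :
    injOnSum f t ≤ injOnSum f s := by
  refine sum_le_sum fun x _ => ?_
  split_ifs with ht hs hs
  · exact le_rfl
  · exact absurd (ht.mono (coe_subset.2 hst)) hs
  · exact prod_nonneg fun _ _ => hf _
  · exact le_rfl

/-- Resampling the coordinate `p`, which the constraint on `s` does not see, turns the
coincidence `x p = x j` into the weight `f (x j)`. -/
theorem sum_mul_sum_injOn_and_eq {s : Finset ι} {p j : ι} (hp : p ∉ s) (hjp : j ≠ p) :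
    (∑ a, f a) * ∑ x : ι → α, (if Set.InjOn x s ∧ x p = x j then ∏ i, f (x i) else 0)
      = ∑ x : ι → α, if Set.InjOn x s then f (x j) * ∏ i, f (x i) else 0 := by
  have hupd : ∀ (x : ι → α) w, Set.InjOn (update x p w) s ↔ Set.InjOn x s := fun x w =>
    ⟨fun h => h.congr fun i hi => update_of_ne (ne_of_mem_of_not_mem hi hp) _ _,
      fun h => h.congr fun i hi => (update_of_ne (ne_of_mem_of_not_mem hi hp) _ _).symm⟩
  calc (∑ a, f a) * ∑ x : ι → α, (if Set.InjOn x s ∧ x p = x j then ∏ i, f (x i) else 0)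
      = ∑ x : ι → α, ∑ w,
          (if Set.InjOn x s ∧ x p = x j then ∏ i, f (x i) else 0) * f w := by
        rw [mul_comm, sum_mul]; simp only [mul_sum]
    _ = ∑ x : ι → α, ∑ w,
          if Set.InjOn x s ∧ w = x j then f w * ∏ i, f (x i) else 0 := by
        rw [Fintype.sum_sum_update_swap p]
        refine sum_congr rfl fun x _ => sum_congr rfl fun w _ => ?_
        simp only [hupd, update_self, update_of_ne hjp]
        split_ifs <;> simp [Fintype.prod_comp_update_mul]
    _ = ∑ x : ι → α, if Set.InjOn x s then f (x j) * ∏ i, f (x i) else 0 := by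
        refine sum_congr rfl fun x _ => ?_
        split_ifs with h <;> simp [h]

theorem injOnSum_sub_injOnSum_insert_le (hf : ∀ a, 0 ≤ f a) {s : Finset ι} {p : ι}
    (hp : p ∉ s) :
    injOnSum f s - injOnSum f (insert p s)
      ≤ ∑ j ∈ s, ∑ x : ι → α,
          if Set.InjOn x s ∧ x p = x j then ∏ i, f (x i) else 0 := by
  rw [injOnSum, injOnSum, ← sum_sub_distrib, sum_comm]
  refine sum_le_sum fun x _ => ?_
  have hterm : ∀ j ∈ s, 0 ≤ if Set.InjOn x s ∧ x p = x j then ∏ i, f (x i) else 0 :=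
    fun j _ => by split_ifs <;> first | exact prod_nonneg fun _ _ => hf _ | exact le_rfl
  have hinsert : Set.InjOn x ↑(insert p s) ↔ Set.InjOn x s ∧ x p ∉ x '' s := by
    rw [coe_insert, Set.injOn_insert (mod_cast hp)]
  by_cases hs : Set.InjOn x s
  · by_cases hcoll : x p ∈ x '' s
    · obtain ⟨j, hj, hxj⟩ := hcoll
      rw [if_pos hs, if_neg fun h => (hinsert.1 h).2 ⟨j, hj, hxj⟩, sub_zero]
      simpa [hs, hxj] using single_le_sum hterm hj
    · rw [if_pos hs, if_pos (hinsert.2 ⟨hs, hcoll⟩), sub_self]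
      exact sum_nonneg hterm
  · rw [if_neg hs, if_neg (by tauto), sub_self]
    exact sum_nonneg hterm

theorem sum_mul_sub_injOnSum_insert_le (hf : ∀ a, 0 ≤ f a) {M : ℝ} (hM : ∀ a, f a ≤ M)
    {s : Finset ι} {p : ι} (hp : p ∉ s) :
    (∑ a, f a) * (injOnSum f s - injOnSum f (insert p s)) ≤ #s * M * injOnSum f s := by
  have hS : 0 ≤ ∑ a, f a := sum_nonneg fun a _ => hf a
  calc (∑ a, f a) * (injOnSum f s - injOnSum f (insert p s))
      ≤ (∑ a, f a) * ∑ j ∈ s, ∑ x : ι → α,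
          if Set.InjOn x s ∧ x p = x j then ∏ i, f (x i) else 0 :=
        mul_le_mul_of_nonneg_left (injOnSum_sub_injOnSum_insert_le hf hp) hS
    _ = ∑ j ∈ s, ∑ x : ι → α, if Set.InjOn x s then f (x j) * ∏ i, f (x i) else 0 := by
        rw [mul_sum]
        exact sum_congr rfl fun j hj =>
          sum_mul_sum_injOn_and_eq hp (ne_of_mem_of_not_mem hj hp)
    _ ≤ ∑ _j ∈ s, M * injOnSum f s := by
        refine sum_le_sum fun j _ => ?_
        rw [injOnSum, mul_sum]
        refine sum_le_sum fun x _ => ?_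
        split_ifs
        · exact mul_le_mul_of_nonneg_right (hM _) (prod_nonneg fun _ _ => hf _)
        · simp
    _ = #s * M * injOnSum f s := by rw [sum_const, nsmul_eq_mul, mul_assoc]

end InjOnSum

theorem mul_sub_le_of_mul_sub_succ_le {a : ℕ → ℝ} (ha : Monotone a) {S c : ℝ} (hc : 0 ≤ c)
    {k : ℕ} (h : ∀ m < k, S * (a (m + 1) - a m) ≤ c * a (m + 1)) :
    S * (a k - a 0) ≤ k * c * a k := by
  rw [← sum_range_sub, mul_sum]
  calc ∑ m ∈ range k, S * (a (m + 1) - a m)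
      ≤ ∑ _m ∈ range k, c * a k :=
        sum_le_sum fun m hm => (h m (mem_range.1 hm)).trans
          (mul_le_mul_of_nonneg_left (ha (mem_range.1 hm)) hc)
    _ = k * c * a k := by rw [sum_const, card_range, nsmul_eq_mul, mul_assoc]

def Fin.indicesFrom (r m : ℕ) : Finset (Fin r) := univ.filter fun i => m ≤ (i : ℕ)

theorem distinctFrom_iff_injOn {r N : ℕ} (m : ℕ) (x : Fin r → Fin N) :
    DistinctFrom m x ↔ Set.InjOn x (Fin.indicesFrom r m) := by
  simp only [Set.InjOn, Fin.indicesFrom, coe_filter, mem_univ, true_and]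
  exact ⟨fun h a ha b hb => h a b ha hb, fun h a b ha hb => h ha hb⟩

theorem sum_ite_distinctFrom_eq_injOnSum {r N : ℕ} (f : Fin N → ℝ) (m : ℕ) :
    (∑ x : Fin r → Fin N, if DistinctFrom m x then ∏ i, f (x i) else 0)
      = injOnSum f (Fin.indicesFrom r m) :=
  sum_congr rfl fun x _ => if_congr (distinctFrom_iff_injOn m x) rfl rfl

theorem Fin.indicesFrom_anti {r : ℕ} : Antitone (Fin.indicesFrom r) :=
  fun _ _ h _ hi => by
    simp only [Fin.indicesFrom, mem_filter, mem_univ, true_and] at hi ⊢; omega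

theorem Fin.indicesFrom_eq_insert {r m : ℕ} (hm : m < r) :
    Fin.indicesFrom r m = insert ⟨m, hm⟩ (Fin.indicesFrom r (m + 1)) := by
  ext i
  simp only [indicesFrom, mem_filter, mem_univ, true_and, Order.add_one_le_iff, mem_insert,
    Fin.ext_iff]
  omega

theorem Fin.notMem_indicesFrom_succ {r m : ℕ} (hm : m < r) :
    (⟨m, hm⟩ : Fin r) ∉ Fin.indicesFrom r (m + 1) := by
  simp [Fin.indicesFrom]

theorem sum_mul_sub_injOnSum_indicesFrom_le {r N : ℕ} {f : Fin N → ℝ} (hf : ∀ a, 0 ≤ f a)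
    {M : ℝ} (hM0 : 0 ≤ M) (hM : ∀ a, f a ≤ M) {m : ℕ} (hm : m < r) :
    (∑ a, f a) * (injOnSum f (Fin.indicesFrom r (m + 1)) - injOnSum f (Fin.indicesFrom r m))
      ≤ r * M * injOnSum f (Fin.indicesFrom r (m + 1)) := by
  rw [Fin.indicesFrom_eq_insert hm]
  refine (sum_mul_sub_injOnSum_insert_le hf hM (Fin.notMem_indicesFrom_succ hm)).trans ?_
  have hcard : (#(Fin.indicesFrom r (m + 1)) : ℝ) ≤ r := by
    exact_mod_cast (card_le_univ _).trans_eq (Fintype.card_fin r)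
  exact mul_le_mul_of_nonneg_right (mul_le_mul_of_nonneg_right hcard hM0)
    (injOnSum_nonneg hf _)

theorem stmt_12_general (k : ℕ) (C τ : ℝ) (hC : 0 < C) :
    ∃ C' > 0, ∃ S₀ : ℝ, ∀ (N r : ℕ) (f : Fin N → ℝ) (S : ℝ),
      (∀ i, 0 ≤ f i) → (∑ i, f i) = S → S₀ ≤ S →
      (∀ i, f i ≤ C * S ^ ((1 : ℝ) / 2 - τ)) →
      (r : ℝ) ≤ C * S ^ ((1 : ℝ) / 2 - τ) → k ≤ r →
      |(∑ x : Fin r → Fin N,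
          if DistinctFrom 0 x then ∏ i, f (x i) else 0)
        - (∑ x : Fin r → Fin N,
            if DistinctFrom k x then ∏ i, f (x i) else 0)|
        ≤ C' * S ^ (-(2 * τ)) *
          (∑ x : Fin r → Fin N,
            if DistinctFrom k x then ∏ i, f (x i) else 0) := by
  refine ⟨(k + 1) * C ^ 2, by positivity, 1, fun N r f S hf hfS hS1 hfM hr hkr => ?_⟩
  have hS : 0 < S := one_pos.trans_le hS1
  set M := C * S ^ ((1 : ℝ) / 2 - τ)
  have hM0 : 0 ≤ M := by positivity
  simp only [sum_ite_distinctFrom_eq_injOnSum]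
  set A := fun m => injOnSum f (Fin.indicesFrom r m)
  have hA : Monotone A := fun _ _ h => injOnSum_anti hf (Fin.indicesFrom_anti h)
  have htele : S * (A k - A 0) ≤ k * (r * M) * A k :=
    mul_sub_le_of_mul_sub_succ_le hA (by positivity) fun m hm => by
      rw [← hfS]
      exact sum_mul_sub_injOnSum_indicesFrom_le hf hM0 hfM (hm.trans_le hkr)
  have hrM : r * M ≤ C ^ 2 * S ^ (-(2 * τ)) * S := by
    calc r * M ≤ M * M := mul_le_mul_of_nonneg_right hr hM0
      _ = C ^ 2 * S ^ (-(2 * τ)) * S := by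
        rw [mul_assoc (C ^ 2), ← Real.rpow_add_one hS.ne', mul_mul_mul_comm,
          ← Real.rpow_add hS]
        ring_nf
  have hAk : 0 ≤ S ^ (-(2 * τ)) * A k := mul_nonneg (by positivity) (injOnSum_nonneg hf _)
  rw [abs_sub_comm, abs_of_nonneg (sub_nonneg.2 (hA k.zero_le))]
  refine le_of_mul_le_mul_left ?_ hS
  calc S * (A k - A 0) ≤ k * (C ^ 2 * S ^ (-(2 * τ)) * S) * A k := by
        refine htele.trans (mul_le_mul_of_nonneg_right ?_ (injOnSum_nonneg hf _))
        exact mul_le_mul_of_nonneg_left hrM k.cast_nonneg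
    _ ≤ S * ((k + 1) * C ^ 2 * S ^ (-(2 * τ)) * A k) := by
        nlinarith [mul_nonneg (mul_nonneg (sq_nonneg C) hS.le) hAk]

/-- Lemma 2: for nonnegative `f` with `∑ f = S`, `max f = O(S^{1/2-τ})`,
`r = O(S^{1/2-τ})` and fixed `k ≤ r`, the fully-distinct sum
`∑_{x₁≠⋯≠x_r} ∏ f(x_i)` equals
`ξ = ∑_{x₁,…,x_k, x_{k+1}≠⋯≠x_r} ∏ f(x_i)` up to a relative error
`O(S^{-2τ})`: there are constants `C' > 0` and `S₀` (depending only on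
`k, τ` and the implied constant `C`) such that
`|∑_{x₁≠⋯≠x_r} ∏ f(x_i) - ξ| ≤ C'·S^{-2τ}·ξ` whenever `S ≥ S₀`. -/
theorem stmt_12 (k : ℕ) (C τ : ℝ) (hC : 0 < C) (hτ : 0 < τ) :
    ∃ C' > 0, ∃ S₀ : ℝ, ∀ (N r : ℕ) (f : Fin N → ℝ) (S : ℝ),
      (∀ i, 0 ≤ f i) → (∑ i, f i) = S → S₀ ≤ S →
      (∀ i, f i ≤ C * S ^ ((1 : ℝ) / 2 - τ)) →
      (r : ℝ) ≤ C * S ^ ((1 : ℝ) / 2 - τ) → k ≤ r →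
      |(∑ x : Fin r → Fin N,
          if DistinctFrom 0 x then ∏ i, f (x i) else 0)
        - (∑ x : Fin r → Fin N,
            if DistinctFrom k x then ∏ i, f (x i) else 0)|
        ≤ C' * S ^ (-(2 * τ)) *
          (∑ x : Fin r → Fin N,
            if DistinctFrom k x then ∏ i, f (x i) else 0) :=
  stmt_12_general k C τ hC
end

section
/- Let f, g : {1,...,N} → [0,∞) with g ≤ f pointwise, Σ_i f(i) = S, max f = O(S^{1/2-τ}), r = O(S^{1/2-τ}), fixed natural numbers k > m > 1 with r ≥ k, and τ > 0. Define ζ = Σ over tuples where x_1 = x_2 = ... = x_m, x_{m+1},...,x_k are unconstrained, and x_{k+1},...,x_r are pairwise distinct, of g(x_1)·∏_{i=2}^r f(x_i). Then Σ over tuples where x_1 = ... = x_m and x_m, x_{m+1},...,x_r are pairwise distinct of g(x_1)·∏_{i=2}^r f(x_i) equals ζ·(1 + O(S^{-2τ})). -/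
/-!
Subtracting the two sums leaves the weight of the tuples counted by `ζ` in which two coordinates
`x_c = x_d` collide, with `c ≥ m` and one of `c, d` below `k`; there are at most `2kr` such index
pairs. For a fixed pair, re-sampling `x_c` among the values not taken by the distinct block is an
injection from (colliding tuple, new value) into the tuples counted by `ζ`, and the new values carry
`f`-mass at least `S - rM`, where `M = C S^{1/2-τ}` bounds `f`. Hence each collision sum is at most
`M ζ / (S - rM)`, and since `rM ≤ M² = C² S^{-2τ} · S ≤ S / 2` the relative error is at most
`4 k C² S^{-2τ}`.
-/

open Finset Function

section Switching

variable {ι α : Type*} [DecidableEq ι]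

def tupleWeight [Fintype ι] (i₀ : ι) (f g : α → ℝ) (x : ι → α) : ℝ :=
  g (x i₀) * ∏ i ∈ univ.erase i₀, f (x i)

variable {i₀ : ι} {f g : α → ℝ}

lemma tupleWeight_nonneg [Fintype ι] (hg : 0 ≤ g) (hf : 0 ≤ f) (x : ι → α) :
    0 ≤ tupleWeight i₀ f g x :=
  mul_nonneg (hg _) (prod_nonneg fun _ _ => hf _)

lemma mul_tupleWeight_update [Fintype ι] {c : ι} (hc : c ≠ i₀) (x : ι → α) (v : α) :
    f v * tupleWeight i₀ f g x = f (x c) * tupleWeight i₀ f g (update x c v) := by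
  have hcmem : c ∈ univ.erase i₀ := mem_erase.mpr ⟨hc, mem_univ _⟩
  have hrest : ∏ i ∈ (univ.erase i₀).erase c, f (update x c v i)
      = ∏ i ∈ (univ.erase i₀).erase c, f (x i) :=
    prod_congr rfl fun i hi => by rw [update_of_ne (ne_of_mem_erase hi)]
  simp only [tupleWeight, update_of_ne hc.symm, ← mul_prod_erase _ _ hcmem, update_self, hrest]
  ring

lemma update_injOn_of_apply_eq {c d : ι} (hdc : d ≠ c) :
    Set.InjOn (fun p : (Σ _ : ι → α, α) => update p.1 c p.2) {p | p.1 c = p.1 d} := by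
  rintro ⟨x, v⟩ hx ⟨y, u⟩ hy h
  have hvu : v = u := by simpa using congrFun h c
  have hd : x d = y d := by simpa [update_of_ne hdc] using congrFun h d
  have hxy : x = y := by
    funext i
    by_cases hic : i = c
    · subst hic
      exact (hx.trans hd).trans (show y i = y d from hy).symm
    · simpa [update_of_ne hic] using congrFun h i
  subst hvu hxy
  rfl

lemma sum_sub_card_mul_le_sum_sdiff [Fintype α] [DecidableEq α] {M : ℝ} (hfM : ∀ a, f a ≤ M)
    (s : Finset α) :
    ∑ a, f a - #s * M ≤ ∑ a ∈ univ \ s, f a := by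
  have := sum_le_card_nsmul s f M fun a _ => hfM a
  rw [nsmul_eq_mul] at this
  rw [sum_sdiff_eq_sub (subset_univ s)]
  linarith

/-- Re-sampling `x c` of a tuple with `x c = x d` to a value `v ∉ x '' T` is injective in `(x, v)`
(as `x c` is recovered from `x d`) and trades the factor `f v` for `f (x c) ≤ M`. -/
theorem sum_tupleWeight_collision_le [Fintype ι] [Fintype α] [DecidableEq α]
    (P : (ι → α) → Prop) [DecidablePred P] {c d : ι}
    (hc : c ≠ i₀) (hdc : d ≠ c) (T : Finset ι)
    (hP : ∀ x, P x → ∀ v ∉ T.image x, P (update x c v))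
    (hg : 0 ≤ g) (hf : 0 ≤ f) {M : ℝ} (hM : 0 ≤ M) (hfM : ∀ a, f a ≤ M) :
    (∑ a, f a - #T * M) * ∑ x with P x ∧ x c = x d, tupleWeight i₀ f g x
      ≤ M * ∑ x with P x, tupleWeight i₀ f g x := by
  set B := univ.filter fun x : ι → α => P x ∧ x c = x d
  set D := B.sigma fun x => univ \ T.image x
  set e := fun p : (Σ _ : ι → α, α) => update p.1 c p.2
  have hw := tupleWeight_nonneg (i₀ := i₀) hg hf
  have hinj : Set.InjOn e D := (update_injOn_of_apply_eq hdc).mono fun p hp => by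
    simp only [D, B, mem_coe, mem_sigma, mem_filter] at hp
    exact hp.1.2.2
  have himage : D.image e ⊆ univ.filter P := by
    simp only [subset_iff, mem_image, mem_filter, mem_univ, true_and]
    rintro _ ⟨⟨x, v⟩, hp, rfl⟩
    simp only [D, B, mem_sigma, mem_filter, mem_sdiff, mem_univ, true_and] at hp
    exact hP x hp.1.1 v hp.2
  calc (∑ a, f a - #T * M) * ∑ x ∈ B, tupleWeight i₀ f g x
      ≤ ∑ x ∈ B, (∑ v ∈ univ \ T.image x, f v) * tupleWeight i₀ f g x := by
        rw [mul_sum]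
        gcongr with x
        · exact hw x
        · exact (sum_sub_card_mul_le_sum_sdiff hfM _).trans' (by gcongr; exact card_image_le)
    _ = ∑ p ∈ D, f (p.1 c) * tupleWeight i₀ f g (e p) := by
        simp only [D, sum_sigma, sum_mul]
        exact sum_congr rfl fun x _ => sum_congr rfl fun v _ => mul_tupleWeight_update hc x v
    _ ≤ M * ∑ p ∈ D, tupleWeight i₀ f g (e p) := by
        rw [mul_sum]
        gcongr with p
        · exact hw _
        · exact hfM _
    _ ≤ M * ∑ x with P x, tupleWeight i₀ f g x := by
        rw [← sum_image hinj]
        exact mul_le_mul_of_nonneg_left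
          (sum_le_sum_of_subset_of_nonneg himage fun x _ _ => hw x) hM

end Switching

lemma sum_le_sum_sum_filter_of_cover {β γ M : Type*} [AddCommMonoid M] [PartialOrder M]
    [IsOrderedAddMonoid M] {s : Finset β} {J : Finset γ} {R : γ → β → Prop}
    [∀ j, DecidablePred (R j)] {w : β → M} (hw : ∀ x ∈ s, 0 ≤ w x)
    (hcover : ∀ x ∈ s, ∃ j ∈ J, R j x) :
    ∑ x ∈ s, w x ≤ ∑ j ∈ J, ∑ x ∈ s with R j x, w x := by
  simp only [sum_filter]
  rw [sum_comm]
  refine sum_le_sum fun x hx => ?_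
  obtain ⟨j, hj, hRj⟩ := hcover x hx
  calc w x = if R j x then w x else 0 := (if_pos hRj).symm
    _ ≤ ∑ j ∈ J, if R j x then w x else 0 :=
        single_le_sum (f := fun j => if R j x then w x else 0)
          (fun j _ => by split_ifs <;> simp [hw x hx]) hj

section Tuples

variable {N r k m : ℕ}

lemma EqOnFirst.update {x : Fin r → Fin N} (hx : EqOnFirst m x) {c : Fin r} (hc : m ≤ (c : ℕ))
    (v : Fin N) : EqOnFirst m (update x c v) := by
  intro i j hi hj
  rw [update_of_ne (by rintro rfl; omega), update_of_ne (by rintro rfl; omega)]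
  exact hx i j hi hj

lemma DistinctFrom.update {x : Fin r → Fin N} (hx : DistinctFrom k x) (c : Fin r) {v : Fin N}
    (hv : v ∉ ((univ.filter fun l : Fin r => k ≤ (l : ℕ)).erase c).image x) :
    DistinctFrom k (update x c v) := by
  have hfresh : ∀ l : Fin r, k ≤ (l : ℕ) → l ≠ c → x l ≠ v := fun l hl hlc h =>
    hv (mem_image.mpr ⟨l, mem_erase.mpr ⟨hlc, mem_filter.mpr ⟨mem_univ _, hl⟩⟩, h⟩)
  intro i j hi hj hij
  by_cases hic : i = c <;> by_cases hjc : j = c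
  · rw [hic, hjc]
  · rw [hic, update_self, update_of_ne hjc] at hij
    exact absurd hij.symm (hfresh j hj hjc)
  · rw [hjc, update_self, update_of_ne hic] at hij
    exact absurd hij (hfresh i hi hic)
  · rw [update_of_ne hic, update_of_ne hjc] at hij
    exact hx i j hi hj hij

lemma DistinctFrom.mono {x : Fin r → Fin N} {k' : ℕ} (hx : DistinctFrom k' x) (hk : k' ≤ k) :
    DistinctFrom k x :=
  fun i j hi hj => hx i j (hk.trans hi) (hk.trans hj)

def collisionPairs (r k m : ℕ) : Finset (Fin r × Fin r) :=
  univ.filter fun p => m ≤ (p.1 : ℕ) ∧ p.2 ≠ p.1 ∧ ((p.1 : ℕ) < k ∨ (p.2 : ℕ) < k)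

lemma card_collisionPairs_le : #(collisionPairs r k m) ≤ 2 * k * r := by
  set L := univ.filter fun i : Fin r => (i : ℕ) < k
  have hL : #L ≤ k := Fin.card_filter_val_lt.trans_le (min_le_right _ _)
  have hsub : collisionPairs r k m ⊆ L ×ˢ univ ∪ univ ×ˢ L := by
    intro p hp
    simp only [collisionPairs, L, mem_filter, mem_union, mem_product, mem_univ, true_and,
      and_true] at hp ⊢
    exact hp.2.2
  calc #(collisionPairs r k m) ≤ #(L ×ˢ univ ∪ univ ×ˢ L) := card_le_card hsub
    _ ≤ #L * r + r * #L := by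
        simpa only [card_product, card_univ, Fintype.card_fin] using
          card_union_le (L ×ˢ univ) (univ ×ˢ L)
    _ ≤ 2 * k * r := by nlinarith

lemma exists_mem_collisionPairs {x : Fin r → Fin N} (hx : DistinctFrom k x)
    (hnx : ¬ DistinctFrom (m - 1) x) : ∃ p ∈ collisionPairs r k m, x p.1 = x p.2 := by
  simp only [DistinctFrom, not_forall] at hnx
  obtain ⟨i, j, hi, hj, hij, hne⟩ := hnx
  have hbelow : (i : ℕ) < k ∨ (j : ℕ) < k := by
    by_contra! h
    exact hne (hx i j h.1 h.2 hij)
  have hval : (i : ℕ) ≠ j := fun h => hne (Fin.ext h)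
  by_cases him : m ≤ (i : ℕ)
  · exact ⟨(i, j), mem_filter.mpr ⟨mem_univ _, him, Ne.symm hne, hbelow⟩, hij⟩
  · have hjm : m ≤ (j : ℕ) := by omega
    exact ⟨(j, i), mem_filter.mpr ⟨mem_univ _, hjm, hne, hbelow.symm⟩, hij.symm⟩

variable {f g : Fin N → ℝ} {M : ℝ}

lemma sum_tupleWeight_collisionPairs_le (hm : 0 < m) (h0 : 0 < r) (hg : 0 ≤ g) (hf : 0 ≤ f)
    (hM : 0 ≤ M) (hfM : ∀ a, f a ≤ M) {p : Fin r × Fin r} (hp : p ∈ collisionPairs r k m) :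
    (∑ a, f a - r * M) *
        ∑ x with (EqOnFirst m x ∧ DistinctFrom k x) ∧ x p.1 = x p.2, tupleWeight ⟨0, h0⟩ f g x
      ≤ M * ∑ x with EqOnFirst m x ∧ DistinctFrom k x, tupleWeight ⟨0, h0⟩ f g x := by
  obtain ⟨hmc, hdc, -⟩ := (mem_filter.mp hp).2
  set T := (univ.filter fun l : Fin r => k ≤ (l : ℕ)).erase p.1
  have hT : (#T : ℝ) ≤ r := by
    exact_mod_cast (card_erase_le.trans (card_filter_le _ _)).trans_eq (card_fin r)
  refine le_trans ?_ (sum_tupleWeight_collision_le _ (Fin.ne_of_val_ne (by simp; omega)) hdc T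
    (fun x hx v hv => ⟨hx.1.update hmc v, hx.2.update p.1 hv⟩) hg hf hM hfM)
  gcongr
  exact sum_nonneg fun x _ => tupleWeight_nonneg hg hf x

lemma sum_distinctFrom_sub_sum_distinctFrom (hmk : m - 1 ≤ k) (w : (Fin r → Fin N) → ℝ) :
    ∑ x with EqOnFirst m x ∧ DistinctFrom k x, w x
        - ∑ x with EqOnFirst m x ∧ DistinctFrom (m - 1) x, w x
      = ∑ x with (EqOnFirst m x ∧ DistinctFrom k x) ∧ ¬ DistinctFrom (m - 1) x, w x := by
  rw [sub_eq_iff_eq_add', ← sum_filter_add_sum_filter_not (univ.filter _) (DistinctFrom (m - 1)),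
    filter_filter, filter_filter]
  congr 2
  ext x
  simp only [mem_filter, mem_univ, true_and]
  exact ⟨fun h => ⟨h.1.1, h.2⟩, fun h => ⟨⟨h.1, h.2.mono hmk⟩, h.2⟩⟩

theorem sum_distinctFrom_sub_sum_distinctFrom_le (hm : 0 < m) (hmk : m - 1 ≤ k) (h0 : 0 < r)
    (hg : 0 ≤ g) (hf : 0 ≤ f) (hM : 0 ≤ M) (hfM : ∀ a, f a ≤ M) (hrM : r * M ≤ ∑ a, f a) :
    (∑ a, f a - r * M) *
        (∑ x with EqOnFirst m x ∧ DistinctFrom k x, tupleWeight ⟨0, h0⟩ f g x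
          - ∑ x with EqOnFirst m x ∧ DistinctFrom (m - 1) x, tupleWeight ⟨0, h0⟩ f g x)
      ≤ 2 * k * r * M * ∑ x with EqOnFirst m x ∧ DistinctFrom k x, tupleWeight ⟨0, h0⟩ f g x := by
  set Z := ∑ x with EqOnFirst m x ∧ DistinctFrom k x, tupleWeight ⟨0, h0⟩ f g x
  set s := univ.filter fun x : Fin r → Fin N =>
    (EqOnFirst m x ∧ DistinctFrom k x) ∧ ¬ DistinctFrom (m - 1) x
  have hw := tupleWeight_nonneg (i₀ := (⟨0, h0⟩ : Fin r)) hg hf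
  have hcover : ∑ x ∈ s, tupleWeight ⟨0, h0⟩ f g x
      ≤ ∑ p ∈ collisionPairs r k m, ∑ x ∈ s with x p.1 = x p.2, tupleWeight ⟨0, h0⟩ f g x :=
    sum_le_sum_sum_filter_of_cover (fun x _ => hw x) fun x hx =>
      exists_mem_collisionPairs (mem_filter.mp hx).2.1.2 (mem_filter.mp hx).2.2
  have hpair : ∀ p ∈ collisionPairs r k m,
      (∑ a, f a - r * M) * ∑ x ∈ s with x p.1 = x p.2, tupleWeight ⟨0, h0⟩ f g x ≤ M * Z := by
    intro p hp
    have hsub : s.filter (fun x => x p.1 = x p.2)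
        ⊆ univ.filter fun x => (EqOnFirst m x ∧ DistinctFrom k x) ∧ x p.1 = x p.2 := by
      intro x
      simp only [s, mem_filter, mem_univ, true_and]
      tauto
    refine le_trans ?_ (sum_tupleWeight_collisionPairs_le hm h0 hg hf hM hfM hp)
    exact mul_le_mul_of_nonneg_left (sum_le_sum_of_subset_of_nonneg hsub fun x _ _ => hw x)
      (by linarith)
  calc (∑ a, f a - r * M) * (Z - _)
      = (∑ a, f a - r * M) * ∑ x ∈ s, tupleWeight ⟨0, h0⟩ f g x := by
        rw [sum_distinctFrom_sub_sum_distinctFrom hmk]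
    _ ≤ ∑ p ∈ collisionPairs r k m,
          (∑ a, f a - r * M) * ∑ x ∈ s with x p.1 = x p.2, tupleWeight ⟨0, h0⟩ f g x := by
        rw [← mul_sum]
        exact mul_le_mul_of_nonneg_left hcover (by linarith)
    _ ≤ #(collisionPairs r k m) * (M * Z) := by
        simpa only [sum_const, nsmul_eq_mul] using sum_le_sum hpair
    _ ≤ 2 * k * r * M * Z := by
        have hZ : 0 ≤ Z := sum_nonneg fun x _ => hw x
        have hcard : (#(collisionPairs r k m) : ℝ) ≤ 2 * k * r := by
          exact_mod_cast card_collisionPairs_le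
        nlinarith [mul_nonneg hM hZ]

theorem abs_sum_distinctFrom_sub_sum_distinctFrom_le (hm : 0 < m) (hmk : m - 1 ≤ k) (h0 : 0 < r)
    (hg : 0 ≤ g) (hf : 0 ≤ f) (hM : 0 ≤ M) (hfM : ∀ a, f a ≤ M) (hS : 0 < ∑ a, f a) {ε : ℝ}
    (hε : ε ≤ 1 / 2) (hrM : r * M ≤ ε * ∑ a, f a) :
    |∑ x with EqOnFirst m x ∧ DistinctFrom (m - 1) x, tupleWeight ⟨0, h0⟩ f g x
        - ∑ x with EqOnFirst m x ∧ DistinctFrom k x, tupleWeight ⟨0, h0⟩ f g x|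
      ≤ 4 * k * ε * ∑ x with EqOnFirst m x ∧ DistinctFrom k x, tupleWeight ⟨0, h0⟩ f g x := by
  have key := sum_distinctFrom_sub_sum_distinctFrom_le hm hmk h0 hg hf hM hfM (by nlinarith)
  set S := ∑ a, f a
  set Z := ∑ x with EqOnFirst m x ∧ DistinctFrom k x, tupleWeight ⟨0, h0⟩ f g x
  set A := ∑ x with EqOnFirst m x ∧ DistinctFrom (m - 1) x, tupleWeight ⟨0, h0⟩ f g x
  have hw := tupleWeight_nonneg (i₀ := (⟨0, h0⟩ : Fin r)) hg hf
  have hAZ : 0 ≤ Z - A := by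
    rw [sum_distinctFrom_sub_sum_distinctFrom hmk]
    exact sum_nonneg fun x _ => hw x
  have hZ : 0 ≤ Z := sum_nonneg fun x _ => hw x
  rw [abs_sub_comm, abs_of_nonneg hAZ]
  have hhalf : S / 2 * (Z - A) ≤ (S - r * M) * (Z - A) :=
    mul_le_mul_of_nonneg_right (by nlinarith) hAZ
  have hε' : 2 * k * (r * M) * Z ≤ 2 * k * (ε * S) * Z := by gcongr
  refine le_of_mul_le_mul_left ?_ hS
  nlinarith

end Tuples

lemma rpow_neg_two_mul_le_half {C S τ : ℝ} (hτ : 0 < τ) (hS : 0 < S)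
    (hS₀ : (2 * C ^ 2) ^ (2 * τ)⁻¹ ≤ S) : C ^ 2 * S ^ (-(2 * τ)) ≤ 1 / 2 := by
  have hpow : 2 * C ^ 2 ≤ S ^ (2 * τ) :=
    (Real.rpow_inv_le_iff_of_pos (by positivity) hS.le (by positivity)).mp hS₀
  rw [Real.rpow_neg hS.le, ← div_eq_mul_inv, div_le_iff₀ (by positivity)]
  linarith

lemma mul_rpow_half_sub_sq {C S τ : ℝ} (hS : 0 < S) :
    (C * S ^ ((1 : ℝ) / 2 - τ)) ^ 2 = C ^ 2 * S ^ (-(2 * τ)) * S := by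
  rw [mul_pow, ← Real.rpow_mul_natCast hS.le, mul_assoc, ← Real.rpow_add_one hS.ne']
  congr 2
  push_cast
  ring

/-- Corollary (to Lemma 2): for `0 ≤ g ≤ f` with `∑ f = S`,
`max f = O(S^{1/2-τ})`, `r = O(S^{1/2-τ})`, and fixed `k > m > 1` with
`r ≥ k`, the sum over tuples with `x₁ = ⋯ = x_m` and `x_m, x_{m+1}, …, x_r`
pairwise distinct of `g(x₁)·∏_{i=2}^r f(x_i)` equals
`ζ` (the same sum with `x_{m+1},…,x_k` freed) up to a relative error
`O(S^{-2τ})`. -/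
theorem stmt_13 (k m : ℕ) (hm : 1 < m) (hk : m < k) (C τ : ℝ)
    (hC : 0 < C) (hτ : 0 < τ) :
    ∃ C' > 0, ∃ S₀ : ℝ, ∀ (N r : ℕ) (f g : Fin N → ℝ) (S : ℝ),
      (∀ i, 0 ≤ g i) → (∀ i, g i ≤ f i) → (∑ i, f i) = S → S₀ ≤ S →
      (∀ i, f i ≤ C * S ^ ((1 : ℝ) / 2 - τ)) →
      (r : ℝ) ≤ C * S ^ ((1 : ℝ) / 2 - τ) → ∀ hr : k ≤ r,
      |(∑ x : Fin r → Fin N,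
          if EqOnFirst m x ∧ DistinctFrom (m - 1) x then
            g (x ⟨0, by omega⟩) *
              ∏ i ∈ Finset.univ.erase (⟨0, by omega⟩ : Fin r), f (x i)
          else 0)
        - (∑ x : Fin r → Fin N,
            if EqOnFirst m x ∧ DistinctFrom k x then
              g (x ⟨0, by omega⟩) *
                ∏ i ∈ Finset.univ.erase (⟨0, by omega⟩ : Fin r), f (x i)
            else 0)|
        ≤ C' * S ^ (-(2 * τ)) *
          (∑ x : Fin r → Fin N,
            if EqOnFirst m x ∧ DistinctFrom k x then
              g (x ⟨0, by omega⟩) *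
                ∏ i ∈ Finset.univ.erase (⟨0, by omega⟩ : Fin r), f (x i)
            else 0) := by
  have hk₀ : (0 : ℝ) < k := by exact_mod_cast (by omega : 0 < k)
  refine ⟨4 * k * C ^ 2, by positivity, (2 * C ^ 2) ^ (2 * τ)⁻¹, ?_⟩
  intro N r f g S hg hgf hS hS₀ hfM hrM hr
  have h0 : 0 < r := by omega
  have hf : 0 ≤ f := fun i => (hg i).trans (hgf i)
  have hSpos : 0 < S := (Real.rpow_pos_of_pos (by positivity) _).trans_le hS₀
  set M := C * S ^ ((1 : ℝ) / 2 - τ)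
  have hM : 0 ≤ M := by positivity
  have hrM' : r * M ≤ C ^ 2 * S ^ (-(2 * τ)) * S := by
    rw [← mul_rpow_half_sub_sq hSpos, sq]
    exact mul_le_mul_of_nonneg_right hrM hM
  subst hS
  have key := abs_sum_distinctFrom_sub_sum_distinctFrom_le (m := m) (k := k) (by omega) (by omega)
    h0 hg hf hM hfM hSpos (rpow_neg_two_mul_le_half hτ hSpos hS₀) hrM'
  simp only [sum_filter, tupleWeight] at key
  exact key.trans_eq (by ring)
end
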